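/- arXiv:1506.08657 — 8 statements merged into one kernel-verified Lean document; each statement's English description precedes it below -/
import Mathlib

section
/- Let h : ℝ^d → ℝ^d be twice continuously differentiable, x* ∈ ℝ^d with h(x*) = 0, and suppose constants K̃ ≥ 1, λ' > 0 satisfy ‖exp(Dh(x*) t)‖ ≤ K̃ exp(−λ' t) for all t ≥ 0. Fix κ ∈ (0,1) and set λ = ((1−κ)/K̃²) λ'. Let V : U → ℝ be a continuously differentiable Liapunov function for x* on an open set U containing x*, i.e., V(x*) = 0 and, for all x ∈ U with x ≠ x*, V(x) > 0 and ∇V(x)·h(x) < 0. Let r > 0 be such that the sublevel set V^r := {x ∈ U : V(x) ≤ r} is compact, and let φ : [0,∞) × V^r → ℝ^d be a semiflow of the ODE ẋ = h(x), i.e., φ(0,u) = u, (d/dt)φ(t,u) = h(φ(t,u)), and φ(t,u) ∈ V^r for all u ∈ V^r and t ≥ 0. Then there exists a constant K₁ ≥ 0 such that for all u₀, u₁ ∈ V^r and all t ≥ 0: ‖φ(t,u₀) − φ(t,u₁)‖ ≤ K₁ ‖u₀ − u₁‖ exp(−λ t). -/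
/-!
Up to any fixed time `T`, two trajectories in the compact invariant set `V^r` separate at most
like `e^{L t}`, where `L` is a Lipschitz constant of `h` on `V^r` (Grönwall).

Near `x*`, `h` differs from its linearisation `A = Dh(x*)` by a map with Lipschitz constant
`η = κ λ' / K̃`. So the difference `y` of two trajectories solves `y' = A y + g` with
`‖g‖ ≤ η ‖y‖`, and variation of constants followed by Grönwall's integral inequality gives
`‖y t‖ ≤ K̃ ‖y T‖ e^{-(1 - κ) λ' (t - T)}`. Since `λ ≤ (1 - κ) λ'`, this is the claimed decay.

The Liapunov function provides a time `T` after which every trajectory stays in that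
neighbourhood of `x*`: `V` decreases along trajectories, and its decay rate is bounded away from
zero on the compact set `{ρ ≤ V ≤ r}`.
-/

open Set NormedSpace Topology

theorem le_mul_exp_of_le_add_mul_integral {w : ℝ → ℝ} {a b T : ℝ}
    (hw : ContinuousOn w (Ici T)) (hb : 0 ≤ b)
    (H : ∀ t, T ≤ t → w t ≤ a + b * ∫ τ in T..t, w τ) {t : ℝ} (ht : T ≤ t) :
    w t ≤ a * Real.exp (b * (t - T)) := by
  set F : ℝ → ℝ := fun t => a + b * ∫ τ in T..t, w τ
  have hF' : ∀ x ∈ Ici T, HasDerivWithinAt F (b * w x) (Ici x) x := fun x hx =>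
    have hsub : Ioi x ⊆ Ici T := Ioi_subset_Ici_self.trans (Ici_subset_Ici.2 hx)
    ((intervalIntegral.integral_hasDerivWithinAt_right
      (ContinuousOn.intervalIntegrable_of_Icc hx (hw.mono Icc_subset_Ici_self))
      ((hw.stronglyMeasurableAtFilter_nhdsWithin measurableSet_Ici x).filter_mono
        (nhdsWithin_mono x hsub))
      ((hw x hx).mono hsub)).const_mul b).const_add a
  have hF : ContinuousOn F (Icc T t) := by
    have := intervalIntegral.continuousOn_primitive_interval (μ := MeasureTheory.volume)
      (a := T) (b := t)
      (by rw [uIcc_of_le ht]; exact (hw.mono Icc_subset_Ici_self).integrableOn_Icc)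
    rw [uIcc_of_le ht] at this
    exact (this.const_smul b).const_add a
  have := le_gronwallBound_of_liminf_deriv_right_le (δ := a) (K := b) (ε := 0) hF
    (fun x hx r hr => (hF' x hx.1).liminf_right_slope_le hr) (by simp [F])
    (fun x hx => by simpa using mul_le_mul_of_nonneg_left (H x hx.1) hb) t ⟨ht, le_rfl⟩
  rw [gronwallBound_ε0] at this
  exact (H t ht).trans this

theorem le_mul_exp_neg_of_le_mul_exp_of_le_mul_exp {D : ℝ → ℝ} {d₀ L K ν lam T : ℝ}
    (hd₀ : 0 ≤ d₀) (hL : 0 ≤ L) (hlam : 0 ≤ lam) (hν : ν ≤ -lam) (hK : 1 ≤ K) (hT : 0 ≤ T)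
    (hgrow : ∀ t, 0 ≤ t → D t ≤ d₀ * Real.exp (L * t))
    (hdecay : ∀ t, T ≤ t → D t ≤ K * D T * Real.exp (ν * (t - T))) {t : ℝ} (ht : 0 ≤ t) :
    D t ≤ K * Real.exp ((L + lam) * T) * d₀ * Real.exp (-lam * t) := by
  rcases le_total t T with htT | hTt
  · calc D t ≤ d₀ * Real.exp (L * t) := hgrow t ht
      _ = 1 * Real.exp ((L + lam) * t) * d₀ * Real.exp (-lam * t) := by
          have : Real.exp (L * t) = Real.exp ((L + lam) * t) * Real.exp (-lam * t) := by
            rw [← Real.exp_add]; ring_nf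
          rw [this]; ring
      _ ≤ K * Real.exp ((L + lam) * T) * d₀ * Real.exp (-lam * t) := by gcongr
  · calc D t ≤ K * D T * Real.exp (ν * (t - T)) := hdecay t hTt
      _ ≤ K * (d₀ * Real.exp (L * T)) * Real.exp (-lam * (t - T)) := by
          have := sub_nonneg.2 hTt
          gcongr
          exact hgrow T hT
      _ = K * Real.exp ((L + lam) * T) * d₀ * Real.exp (-lam * t) := by
          have : Real.exp (L * T) * Real.exp (-lam * (t - T)) =
              Real.exp ((L + lam) * T) * Real.exp (-lam * t) := by
            rw [← Real.exp_add, ← Real.exp_add]; ring_nf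
          linear_combination K * d₀ * this

theorem IsCompact.exists_pos_sublevel_subset_of_mem_nhds {X : Type*} [TopologicalSpace X]
    {S : Set X} (hS : IsCompact S) {V : X → ℝ} (hV : ContinuousOn V S) {x₀ : X}
    (hpos : ∀ x ∈ S, x ≠ x₀ → 0 < V x) {s : Set X} (hs : s ∈ 𝓝 x₀) :
    ∃ ρ, 0 < ρ ∧ {x ∈ S | V x ≤ ρ} ⊆ s := by
  obtain ⟨ρ, hρ, hρV⟩ := (hS.diff isOpen_interior).exists_forall_le' (hV.mono sdiff_subset)
    (a := 0) fun x hx => hpos x hx.1 fun hx₀ => hx.2 (hx₀ ▸ mem_interior_iff_mem_nhds.2 hs)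
  refine ⟨ρ / 2, half_pos hρ, fun x hx => ?_⟩
  by_contra hxs
  linarith [hx.2, hρV x ⟨hx.1, fun hxi => hxs (interior_subset hxi)⟩]

variable {E : Type*} [NormedAddCommGroup E] [NormedSpace ℝ E]

theorem hasDerivAt_exp_sub_smul [CompleteSpace E] (A : E →L[ℝ] E) (t τ : ℝ) :
    HasDerivAt (fun s : ℝ => exp ((t - s) • A)) (-(exp ((t - τ) • A) * A)) τ := by
  have h : HasDerivAt (fun s : ℝ => exp ((t - s) • A))
      ((-1 : ℝ) • (exp ((t - τ) • A) * A)) τ :=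
    (hasDerivAt_exp_smul_const (𝕂 := ℝ) (𝔸 := E →L[ℝ] E) A (t - τ)).scomp τ
      (h := fun s => t - s) (by simpa using (hasDerivAt_id τ).const_sub t)
  rwa [neg_one_smul] at h

theorem eq_exp_smul_add_integral_of_hasDerivAt [CompleteSpace E] (A : E →L[ℝ] E)
    {y g : ℝ → E} {T t : ℝ} (hTt : T ≤ t)
    (hy : ∀ τ ∈ Icc T t, HasDerivAt y (A (y τ) + g τ) τ) (hg : ContinuousOn g (Icc T t)) :
    y t = exp ((t - T) • A) (y T) + ∫ τ in T..t, exp ((t - τ) • A) (g τ) := by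
  have hint : ContinuousOn (fun τ => exp ((t - τ) • A) (g τ)) (Icc T t) :=
    (continuous_iff_continuousAt.2 fun τ =>
      (hasDerivAt_exp_sub_smul A t τ).continuousAt).continuousOn.clm_apply hg
  have hderiv : ∀ τ ∈ uIcc T t,
      HasDerivAt (fun s => exp ((t - s) • A) (y s)) (exp ((t - τ) • A) (g τ)) τ := by
    intro τ hτ
    convert (hasDerivAt_exp_sub_smul A t τ).clm_apply (hy τ (by rwa [uIcc_of_le hTt] at hτ))
      using 1
    simp
  rw [intervalIntegral.integral_eq_sub_of_hasDerivAt hderiv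
    (ContinuousOn.intervalIntegrable_of_Icc hTt hint)]
  simp

theorem norm_le_of_hasDerivAt_linear_add [CompleteSpace E] (A : E →L[ℝ] E) {K μ η T : ℝ}
    {y g : ℝ → E} (hA : ∀ s, 0 ≤ s → ‖exp (s • A)‖ ≤ K * Real.exp (-μ * s)) (hη : 0 ≤ η)
    (hy : ∀ τ, T ≤ τ → HasDerivAt y (A (y τ) + g τ) τ) (hg : ContinuousOn g (Ici T))
    (hgy : ∀ τ, T ≤ τ → ‖g τ‖ ≤ η * ‖y τ‖) {t : ℝ} (ht : T ≤ t) :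
    ‖y t‖ ≤ K * ‖y T‖ * Real.exp ((K * η - μ) * (t - T)) := by
  have hK : 0 ≤ K := by simpa using (norm_nonneg _).trans (hA 0 le_rfl)
  have hA_apply : ∀ s v, 0 ≤ s → ‖exp (s • A) v‖ ≤ K * Real.exp (-μ * s) * ‖v‖ :=
    fun s v hs =>
      ((exp (s • A)).le_opNorm v).trans (mul_le_mul_of_nonneg_right (hA s hs) (norm_nonneg v))
  have hyc : ContinuousOn y (Ici T) := fun τ hτ => (hy τ hτ).continuousAt.continuousWithinAt
  set w : ℝ → ℝ := fun τ => Real.exp (μ * (τ - T)) * ‖y τ‖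
  have hw : ContinuousOn w (Ici T) := by fun_prop
  have hw_le : ∀ t, T ≤ t → w t ≤ K * ‖y T‖ + K * η * ∫ τ in T..t, w τ := by
    intro t ht
    have hpoint : ∀ τ ∈ Ioc T t, ‖exp ((t - τ) • A) (g τ)‖ ≤
        Real.exp (-μ * (t - T)) * (K * η * w τ) := fun τ hτ =>
      calc ‖exp ((t - τ) • A) (g τ)‖ ≤ K * Real.exp (-μ * (t - τ)) * (η * ‖y τ‖) :=
            (hA_apply _ _ (sub_nonneg.2 hτ.2)).trans (by gcongr; exact hgy τ hτ.1.le)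
        _ = Real.exp (-μ * (t - T)) * (K * η * w τ) := by
            have : Real.exp (-μ * (t - τ)) =
                Real.exp (-μ * (t - T)) * Real.exp (μ * (τ - T)) := by
              rw [← Real.exp_add]; ring_nf
            simp only [w, this]; ring
    have hyt : ‖y t‖ ≤ Real.exp (-μ * (t - T)) * (K * ‖y T‖ + K * η * ∫ τ in T..t, w τ) := by
      rw [eq_exp_smul_add_integral_of_hasDerivAt A ht (fun τ hτ => hy τ hτ.1)
          (hg.mono Icc_subset_Ici_self),
        mul_add, ← intervalIntegral.integral_const_mul, ← intervalIntegral.integral_const_mul]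
      refine (norm_add_le _ _).trans (add_le_add ?_ ?_)
      · exact (hA_apply _ _ (sub_nonneg.2 ht)).trans_eq (by ring)
      · exact intervalIntegral.norm_integral_le_of_norm_le ht
          (MeasureTheory.ae_of_all _ hpoint)
          (((hw.mono Icc_subset_Ici_self).intervalIntegrable_of_Icc ht).const_mul _ |>.const_mul _)
    calc w t = Real.exp (μ * (t - T)) * ‖y t‖ := rfl
      _ ≤ Real.exp (μ * (t - T)) * (Real.exp (-μ * (t - T)) *
          (K * ‖y T‖ + K * η * ∫ τ in T..t, w τ)) := by gcongr
      _ = K * ‖y T‖ + K * η * ∫ τ in T..t, w τ := by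
          rw [← mul_assoc, ← Real.exp_add]; ring_nf; simp
  calc ‖y t‖ = Real.exp (-μ * (t - T)) * w t := by
        simp only [w, ← mul_assoc, ← Real.exp_add]; ring_nf; simp
    _ ≤ Real.exp (-μ * (t - T)) * (K * ‖y T‖ * Real.exp (K * η * (t - T))) := by
        gcongr
        exact le_mul_exp_of_le_add_mul_integral hw (mul_nonneg hK hη) hw_le ht
    _ = K * ‖y T‖ * Real.exp ((K * η - μ) * (t - T)) := by
        rw [mul_left_comm, ← Real.exp_add]; ring_nf

structure IsSemiflowOn (h : E → E) (S : Set E) (φ : ℝ → E → E) : Prop where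
  map_zero : ∀ u ∈ S, φ 0 u = u
  hasDerivAt : ∀ u ∈ S, ∀ t, 0 ≤ t → HasDerivAt (fun τ => φ τ u) (h (φ t u)) t
  mapsTo : ∀ u ∈ S, ∀ t, 0 ≤ t → φ t u ∈ S

namespace IsSemiflowOn

variable {h : E → E} {S : Set E} {φ : ℝ → E → E}

theorem continuousOn (hφ : IsSemiflowOn h S φ) {u : E} (hu : u ∈ S) :
    ContinuousOn (fun τ => φ τ u) (Ici 0) := fun t ht =>
  (hφ.hasDerivAt u hu t ht).continuousAt.continuousWithinAt

theorem norm_sub_le_mul_exp (hφ : IsSemiflowOn h S φ) {L : NNReal}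
    (hL : LipschitzOnWith L h S) {u₀ u₁ : E} (hu₀ : u₀ ∈ S) (hu₁ : u₁ ∈ S) {t : ℝ}
    (ht : 0 ≤ t) : ‖φ t u₀ - φ t u₁‖ ≤ ‖u₀ - u₁‖ * Real.exp (L * t) := by
  have hderiv : ∀ {u}, u ∈ S → ∀ τ ∈ Ico 0 t,
      HasDerivWithinAt (fun τ => φ τ u) (h (φ τ u)) (Ici τ) τ := fun hu τ hτ =>
    (hφ.hasDerivAt _ hu τ hτ.1).hasDerivWithinAt
  have hcont : ∀ {u}, u ∈ S → ContinuousOn (fun τ => φ τ u) (Icc 0 t) := fun hu =>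
    (hφ.continuousOn hu).mono Icc_subset_Ici_self
  have := dist_le_of_trajectories_ODE_of_mem (v := fun _ => h) (s := fun _ => S)
    (fun _ _ => hL) (hcont hu₀) (hderiv hu₀) (fun τ hτ => hφ.mapsTo _ hu₀ τ hτ.1)
    (hcont hu₁) (hderiv hu₁) (fun τ hτ => hφ.mapsTo _ hu₁ τ hτ.1) le_rfl t ⟨ht, le_rfl⟩
  simpa [dist_eq_norm, hφ.map_zero _ hu₀, hφ.map_zero _ hu₁] using this

theorem norm_sub_le_of_approximatesLinearOn [CompleteSpace E] (hφ : IsSemiflowOn h S φ)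
    (A : E →L[ℝ] E) {K μ : ℝ} {η : NNReal} {s : Set E} {T : ℝ}
    (hA : ∀ s, 0 ≤ s → ‖exp (s • A)‖ ≤ K * Real.exp (-μ * s)) (hh : ContinuousOn h S)
    (hhA : ApproximatesLinearOn h A s η) (hT : 0 ≤ T)
    (hTs : ∀ u ∈ S, ∀ t, T ≤ t → φ t u ∈ s) {u₀ u₁ : E} (hu₀ : u₀ ∈ S) (hu₁ : u₁ ∈ S)
    {t : ℝ} (ht : T ≤ t) :
    ‖φ t u₀ - φ t u₁‖ ≤ K * ‖φ T u₀ - φ T u₁‖ * Real.exp ((K * η - μ) * (t - T)) := by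
  have hφc : ∀ {u}, u ∈ S → ContinuousOn (fun τ => φ τ u) (Ici T) := fun hu =>
    (hφ.continuousOn hu).mono (Ici_subset_Ici.2 hT)
  have hhφ : ∀ {u}, u ∈ S → ContinuousOn (fun τ => h (φ τ u)) (Ici T) := fun hu =>
    hh.comp (hφc hu) fun τ hτ => hφ.mapsTo _ hu τ (hT.trans hτ)
  refine norm_le_of_hasDerivAt_linear_add A hA η.2 (y := fun τ => φ τ u₀ - φ τ u₁)
    (g := fun τ => h (φ τ u₀) - h (φ τ u₁) - A (φ τ u₀ - φ τ u₁)) (fun τ hτ => ?_)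
    (((hhφ hu₀).sub (hhφ hu₁)).sub (A.continuous.comp_continuousOn ((hφc hu₀).sub (hφc hu₁))))
    (fun τ hτ => hhA _ (hTs _ hu₀ τ hτ) _ (hTs _ hu₁ τ hτ)) ht
  convert (hφ.hasDerivAt _ hu₀ τ (hT.trans hτ)).fun_sub (hφ.hasDerivAt _ hu₁ τ (hT.trans hτ))
    using 1
  abel

theorem hasDerivAt_comp (hφ : IsSemiflowOn h S φ) {V : E → ℝ}
    (hV : ∀ x ∈ S, DifferentiableAt ℝ V x) {u : E} (hu : u ∈ S) {t : ℝ} (ht : 0 ≤ t) :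
    HasDerivAt (fun τ => V (φ τ u)) (fderiv ℝ V (φ t u) (h (φ t u))) t :=
  (hV _ (hφ.mapsTo u hu t ht)).hasFDerivAt.comp_hasDerivAt t (hφ.hasDerivAt u hu t ht)

theorem antitoneOn_comp (hφ : IsSemiflowOn h S φ) {V : E → ℝ}
    (hV : ∀ x ∈ S, DifferentiableAt ℝ V x) (hVh : ∀ x ∈ S, fderiv ℝ V x (h x) ≤ 0)
    {u : E} (hu : u ∈ S) : AntitoneOn (fun t => V (φ t u)) (Ici 0) := by
  refine antitoneOn_of_hasDerivWithinAt_nonpos (convex_Ici 0)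
    (fun t ht => (hφ.hasDerivAt_comp hV hu ht).continuousAt.continuousWithinAt)
    (fun t ht => (hφ.hasDerivAt_comp hV hu ?_).hasDerivWithinAt) (fun t ht => hVh _ ?_)
  · exact interior_subset (s := Ici 0) ht
  · exact hφ.mapsTo u hu t (interior_subset (s := Ici 0) ht)

theorem exists_forall_le_of_lyapunov (hφ : IsSemiflowOn h S φ) (hS : IsCompact S)
    {V : E → ℝ} (hV : ∀ x ∈ S, DifferentiableAt ℝ V x)
    (hVhc : ContinuousOn (fun x => fderiv ℝ V x (h x)) S) {x₀ : E} (hx₀ : h x₀ = 0)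
    (hVh : ∀ x ∈ S, x ≠ x₀ → fderiv ℝ V x (h x) < 0) {ρ : ℝ} (hρ : V x₀ < ρ) :
    ∃ T, 0 ≤ T ∧ ∀ u ∈ S, ∀ t, T ≤ t → V (φ t u) ≤ ρ := by
  have hVh_le : ∀ x ∈ S, fderiv ℝ V x (h x) ≤ 0 := fun x hx => by
    rcases eq_or_ne x x₀ with rfl | hne
    · simp [hx₀]
    · exact (hVh x hx hne).le
  have hVc : ContinuousOn V S := fun x hx => (hV x hx).continuousAt.continuousWithinAt
  obtain ⟨M, hM⟩ := hS.bddAbove_image hVc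
  have hK : IsCompact (S ∩ V ⁻¹' Ici ρ) :=
    hS.of_isClosed_subset (hVc.preimage_isClosed_of_isClosed hS.isClosed isClosed_Ici)
      inter_subset_left
  obtain ⟨c, hc, hcK⟩ := hK.exists_forall_le' (hVhc.neg.mono inter_subset_left)
    (a := 0) fun x hx => neg_pos.2 (hVh x hx.1 (by rintro rfl; exact hρ.not_ge hx.2))
  refine ⟨max 0 ((M - ρ) / c), le_max_left _ _, fun u hu t ht => ?_⟩
  have ht0 : 0 ≤ t := (le_max_left _ _).trans ht
  by_contra! hρt
  have hdecr : V (φ t u) ≤ V u - c * t := by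
    refine image_le_of_deriv_right_le_deriv_boundary (f := fun τ => V (φ τ u))
      (B := fun τ => V u - c * τ) (B' := fun _ => -c)
      (fun τ hτ => (hφ.hasDerivAt_comp hV hu hτ.1).continuousAt.continuousWithinAt)
      (fun τ hτ => (hφ.hasDerivAt_comp hV hu hτ.1).hasDerivWithinAt)
      (by simp [hφ.map_zero u hu]) (by fun_prop)
      (fun τ _ => ((hasDerivAt_id τ).const_mul c).const_sub _ |>.hasDerivWithinAt
        |>.congr_deriv (by simp)) (fun τ hτ => ?_) ⟨ht0, le_rfl⟩
    have hτρ : ρ ≤ V (φ τ u) :=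
      hρt.le.trans (hφ.antitoneOn_comp hV hVh_le hu hτ.1 ht0 hτ.2.le)
    have := hcK _ ⟨hφ.mapsTo u hu τ hτ.1, hτρ⟩
    simp only [Pi.neg_apply] at this
    linarith
  have hMt : M - c * t ≤ ρ := by
    have := (div_le_iff₀ hc).1 ((le_max_right _ _).trans ht)
    linarith
  linarith [hM ⟨u, hu, rfl⟩]

end IsSemiflowOn

theorem stmt11_general {d : ℕ}
    (h : EuclideanSpace ℝ (Fin d) → EuclideanSpace ℝ (Fin d))
    (hh : ContDiff ℝ 2 h)
    (xstar : EuclideanSpace ℝ (Fin d)) (hzero : h xstar = 0)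
    (Ktil lam' : ℝ) (hK : 1 ≤ Ktil) (hlam' : 0 < lam')
    (hexp : ∀ t : ℝ, 0 ≤ t →
      ‖NormedSpace.exp (t • fderiv ℝ h xstar)‖ ≤ Ktil * Real.exp (-lam' * t))
    (κ : ℝ) (hκ : κ ∈ Set.Ioo (0 : ℝ) 1)
    (lam : ℝ) (hlamdef : lam = ((1 - κ) / Ktil ^ 2) * lam')
    (U : Set (EuclideanSpace ℝ (Fin d))) (hU : IsOpen U)
    (V : EuclideanSpace ℝ (Fin d) → ℝ) (hV : ContDiffOn ℝ 1 V U)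
    (hVzero : V xstar = 0)
    (hVpos : ∀ x ∈ U, x ≠ xstar →
      0 < V x ∧ (inner ℝ (gradient V x) (h x) : ℝ) < 0)
    (r : ℝ)
    (hcompact : IsCompact {x ∈ U | V x ≤ r})
    (φ : ℝ → EuclideanSpace ℝ (Fin d) → EuclideanSpace ℝ (Fin d))
    (hφ0 : ∀ u ∈ {x ∈ U | V x ≤ r}, φ 0 u = u)
    (hφd : ∀ u ∈ {x ∈ U | V x ≤ r}, ∀ t : ℝ, 0 ≤ t →
      HasDerivAt (fun τ => φ τ u) (h (φ t u)) t)
    (hφin : ∀ u ∈ {x ∈ U | V x ≤ r}, ∀ t : ℝ, 0 ≤ t → φ t u ∈ {x ∈ U | V x ≤ r}) :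
    ∃ K₁ : ℝ, 0 ≤ K₁ ∧
      ∀ u₀ ∈ {x ∈ U | V x ≤ r}, ∀ u₁ ∈ {x ∈ U | V x ≤ r}, ∀ t : ℝ, 0 ≤ t →
        ‖φ t u₀ - φ t u₁‖ ≤ K₁ * ‖u₀ - u₁‖ * Real.exp (-lam * t) := by
  obtain ⟨hκ0, hκ1⟩ := hκ
  set S := {x ∈ U | V x ≤ r}
  have hSU : S ⊆ U := fun x hx => hx.1
  have hflow : IsSemiflowOn h S φ := ⟨hφ0, hφd, hφin⟩
  have hVh : ∀ x ∈ S, x ≠ xstar → fderiv ℝ V x (h x) < 0 := fun x hx hne => by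
    simpa [inner_gradient_left] using (hVpos x hx.1 hne).2
  obtain ⟨L, hL⟩ := (hh.of_le one_le_two).locallyLipschitz.locallyLipschitzOn
    |>.exists_lipschitzOnWith_of_compact hcompact
  have hK0 : 0 < Ktil := one_pos.trans_le hK
  have hη : 0 < κ * lam' / Ktil := by positivity
  set η : NNReal := ⟨κ * lam' / Ktil, hη.le⟩
  obtain ⟨s, hs, hhA⟩ := (hh.contDiffAt.hasStrictFDerivAt two_ne_zero)
    |>.approximates_deriv_on_nhds (c := η) (Or.inr (NNReal.coe_pos.1 hη))
  obtain ⟨ρ, hρ, hρs⟩ := hcompact.exists_pos_sublevel_subset_of_mem_nhds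
    (hV.continuousOn.mono hSU) (fun x hx hne => (hVpos x hx.1 hne).1) hs
  obtain ⟨T, hT, hTρ⟩ := hflow.exists_forall_le_of_lyapunov hcompact
    (fun x hx => (hV.differentiableOn one_ne_zero).differentiableAt (hU.mem_nhds hx.1))
    (((hV.continuousOn_fderiv_of_isOpen hU le_rfl).clm_apply hh.continuous.continuousOn).mono
      hSU) hzero hVh (hVzero ▸ hρ)
  have hlam : 0 ≤ lam := by rw [hlamdef]; have := sub_nonneg.2 hκ1.le; positivity
  have hrate : Ktil * η - lam' ≤ -lam := by
    change Ktil * (κ * lam' / Ktil) - lam' ≤ _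
    rw [mul_div_cancel₀ _ hK0.ne', hlamdef]
    nlinarith [div_le_self (sub_nonneg.2 hκ1.le) (one_le_pow₀ (n := 2) hK)]
  refine ⟨Ktil * Real.exp ((L + lam) * T), by positivity, fun u₀ hu₀ u₁ hu₁ t ht => ?_⟩
  exact le_mul_exp_neg_of_le_mul_exp_of_le_mul_exp (norm_nonneg _) L.2 hlam hrate hK hT
    (fun t ht => hflow.norm_sub_le_mul_exp hL hu₀ hu₁ ht)
    (fun t ht => hflow.norm_sub_le_of_approximatesLinearOn _ hexp hh.continuous.continuousOn
      hhA hT (fun u hu t ht => hρs ⟨hφin u hu t (hT.trans ht), hTρ u hu t ht⟩) hu₀ hu₁ ht) ht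

/-- Exponential contraction of the semiflow on a compact sublevel set of a Liapunov
function near an equilibrium x* of ẋ = h(x) (Lemma "CloseSolutionsBound"):
∃ K₁ ≥ 0 such that ‖φ(t,u₀) − φ(t,u₁)‖ ≤ K₁ ‖u₀ − u₁‖ exp(−λ t) for all u₀, u₁ in the
sublevel set V^r and all t ≥ 0, where λ = ((1−κ)/K̃²) λ'. -/
theorem stmt11 {d : ℕ}
    (h : EuclideanSpace ℝ (Fin d) → EuclideanSpace ℝ (Fin d))
    (hh : ContDiff ℝ 2 h)
    (xstar : EuclideanSpace ℝ (Fin d)) (hzero : h xstar = 0)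
    (Ktil lam' : ℝ) (hK : 1 ≤ Ktil) (hlam' : 0 < lam')
    (hexp : ∀ t : ℝ, 0 ≤ t →
      ‖NormedSpace.exp (t • fderiv ℝ h xstar)‖ ≤ Ktil * Real.exp (-lam' * t))
    (κ : ℝ) (hκ : κ ∈ Set.Ioo (0 : ℝ) 1)
    (lam : ℝ) (hlamdef : lam = ((1 - κ) / Ktil ^ 2) * lam')
    (U : Set (EuclideanSpace ℝ (Fin d))) (hU : IsOpen U) (hxU : xstar ∈ U)
    (V : EuclideanSpace ℝ (Fin d) → ℝ) (hV : ContDiffOn ℝ 1 V U)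
    (hVzero : V xstar = 0)
    (hVpos : ∀ x ∈ U, x ≠ xstar →
      0 < V x ∧ (inner ℝ (gradient V x) (h x) : ℝ) < 0)
    (r : ℝ) (hr : 0 < r)
    (hcompact : IsCompact {x ∈ U | V x ≤ r})
    (φ : ℝ → EuclideanSpace ℝ (Fin d) → EuclideanSpace ℝ (Fin d))
    (hφ0 : ∀ u ∈ {x ∈ U | V x ≤ r}, φ 0 u = u)
    (hφd : ∀ u ∈ {x ∈ U | V x ≤ r}, ∀ t : ℝ, 0 ≤ t →
      HasDerivAt (fun τ => φ τ u) (h (φ t u)) t)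
    (hφin : ∀ u ∈ {x ∈ U | V x ≤ r}, ∀ t : ℝ, 0 ≤ t → φ t u ∈ {x ∈ U | V x ≤ r}) :
    ∃ K₁ : ℝ, 0 ≤ K₁ ∧
      ∀ u₀ ∈ {x ∈ U | V x ≤ r}, ∀ u₁ ∈ {x ∈ U | V x ≤ r}, ∀ t : ℝ, 0 ≤ t →
        ‖φ t u₀ - φ t u₁‖ ≤ K₁ * ‖u₀ - u₁‖ * Real.exp (-lam * t) :=
  stmt11_general h hh xstar hzero Ktil lam' hK hlam' hexp κ hκ lam hlamdef U hU V hV hVzero hVpos r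
    hcompact φ hφ0 hφd hφin
end

section
/- Let A* be a d×d real matrix with ‖exp(A* t)‖ ≤ K̃ exp(−λ t) for all t ≥ 0, for constants K̃ ≥ 1 and λ > 0. Let s ∈ ℝ, let A : [s,∞) → (d×d real matrices) be continuous with ∫_s^∞ ‖A(τ) − A*‖ dτ ≤ K₂ for a constant K₂ ≥ 0, and let Φ : [s,∞) → (d×d real matrices) be differentiable with Φ'(t) = A(t) Φ(t) for t ≥ s and Φ(s) = I. Then for all t ≥ s: ‖Φ(t)‖ ≤ K̃ exp(K̃ K₂) exp(−λ (t − s)). -/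
set_option maxHeartbeats 1000000
set_option synthInstance.maxHeartbeats 400000

open MeasureTheory Set intervalIntegral

private lemma stmt13_ring_aux {R : Type*} [Ring R] (e a b c : R) :
    e * ((b - a) * c) = -(e * a) * c + e * (b * c) := by noncomm_ring

/-- Let A* be a d×d real matrix (operator on ℝ^d) with ‖exp(A* t)‖ ≤ K̃ exp(−λt) for
t ≥ 0, K̃ ≥ 1, λ > 0. Let A : [s,∞) → d×d matrices be continuous with
∫_s^∞ ‖A(τ) − A*‖ dτ ≤ K₂, and let Φ solve Φ' = A(t) Φ, Φ(s) = I. Then for all t ≥ s,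
‖Φ(t)‖ ≤ K̃ exp(K̃ K₂) exp(−λ(t − s)). -/
theorem stmt13 {d : ℕ}
    (Astar : EuclideanSpace ℝ (Fin d) →L[ℝ] EuclideanSpace ℝ (Fin d))
    (Ktil lam K₂ : ℝ) (hK : 1 ≤ Ktil) (hlam : 0 < lam) (hK₂ : 0 ≤ K₂)
    (hAstar : ∀ t : ℝ, 0 ≤ t →
      ‖NormedSpace.exp (t • Astar)‖ ≤ Ktil * Real.exp (-lam * t))
    (s : ℝ) (A : ℝ → EuclideanSpace ℝ (Fin d) →L[ℝ] EuclideanSpace ℝ (Fin d))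
    (hAcont : ContinuousOn A (Set.Ici s))
    (hAint : MeasureTheory.IntegrableOn (fun τ => ‖A τ - Astar‖) (Set.Ici s)
      MeasureTheory.volume)
    (hAbound : (∫ τ in Set.Ici s, ‖A τ - Astar‖) ≤ K₂)
    (Φ : ℝ → EuclideanSpace ℝ (Fin d) →L[ℝ] EuclideanSpace ℝ (Fin d))
    (hΦs : Φ s = ContinuousLinearMap.id ℝ (EuclideanSpace ℝ (Fin d)))
    (hΦd : ∀ t, s ≤ t → HasDerivAt Φ (A t ∘L Φ t) t) :
    ∀ t, s ≤ t → ‖Φ t‖ ≤ Ktil * Real.exp (Ktil * K₂) * Real.exp (-lam * (t - s)) := by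
  have hKpos : (0:ℝ) < Ktil := lt_of_lt_of_le one_pos hK
  haveI : IsScalarTower ℝ (EuclideanSpace ℝ (Fin d) →L[ℝ] EuclideanSpace ℝ (Fin d))
      (EuclideanSpace ℝ (Fin d) →L[ℝ] EuclideanSpace ℝ (Fin d)) :=
    IsScalarTower.right (R := ℝ) (A := EuclideanSpace ℝ (Fin d) →L[ℝ] EuclideanSpace ℝ (Fin d))
  haveI : SMulCommClass ℝ (EuclideanSpace ℝ (Fin d) →L[ℝ] EuclideanSpace ℝ (Fin d))
      (EuclideanSpace ℝ (Fin d) →L[ℝ] EuclideanSpace ℝ (Fin d)) :=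
    ⟨fun a b c => by show a • b.comp c = b.comp (a • c); rw [ContinuousLinearMap.comp_smul]⟩
  set k : ℝ → ℝ := fun τ => ‖A τ - Astar‖ with hk_def
  have hk0 : ∀ τ, 0 ≤ k τ := fun τ => norm_nonneg _
  have hΦcont : ContinuousOn Φ (Ici s) :=
    fun x hx => ((hΦd x hx).continuousAt).continuousWithinAt
  have hkcont : ContinuousOn k (Ici s) := (hAcont.sub continuousOn_const).norm
  set u : ℝ → ℝ := fun τ => Real.exp (lam * (τ - s)) * ‖Φ τ‖ with hu_def
  have hucont : ContinuousOn u (Ici s) :=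
    ((Real.continuous_exp.comp (by fun_prop)).continuousOn).mul hΦcont.norm
  set Ex : ℝ → _ := fun τ => NormedSpace.exp (-(τ • Astar)) with hEx_def
  have hExd : ∀ τ : ℝ, HasDerivAt Ex (-(Ex τ * Astar)) τ := by
    intro τ
    have h1 := hasDerivAt_exp_smul_const (𝕂 := ℝ) Astar (-τ)
    have h2 : HasDerivAt (fun u : ℝ => -u) (-1) τ := (hasDerivAt_id τ).neg
    have h3 := h1.scomp τ h2
    simp only [Function.comp_def, neg_one_smul, neg_smul, one_smul] at h3
    exact h3
  have hExcont : Continuous Ex :=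
    continuous_iff_continuousAt.mpr fun x => (hExd x).continuousAt
  set P : ℝ → _ := fun τ => Ex τ * Φ τ with hP_def
  have hPd : ∀ τ, s ≤ τ → HasDerivAt P (Ex τ * ((A τ - Astar) * Φ τ)) τ := by
    intro τ hτ
    have h := (hExd τ).mul (hΦd τ hτ)
    exact h.congr_deriv (stmt13_ring_aux (Ex τ) Astar (A τ) (Φ τ)).symm
  have hcomm : ∀ a b : ℝ, NormedSpace.exp (a • Astar) * NormedSpace.exp (b • Astar)
      = NormedSpace.exp ((a + b) • Astar) := by
    intro a b
    have hadd : (a + b) • Astar = a • Astar + b • Astar := add_smul a b Astar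
    have hc : Commute (a • Astar) (b • Astar) := by
      show (a • Astar).comp (b • Astar) = (b • Astar).comp (a • Astar)
      rw [ContinuousLinearMap.smul_comp, ContinuousLinearMap.comp_smul,
        ContinuousLinearMap.smul_comp, ContinuousLinearMap.comp_smul, smul_comm]
    rw [hadd, NormedSpace.exp_add_of_commute_of_mem_ball (𝕂 := ℝ) hc
      ((NormedSpace.expSeries_radius_eq_top ℝ
        (EuclideanSpace ℝ (Fin d) →L[ℝ] EuclideanSpace ℝ (Fin d))).symm ▸ edist_lt_top _ _)
      ((NormedSpace.expSeries_radius_eq_top ℝ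
        (EuclideanSpace ℝ (Fin d) →L[ℝ] EuclideanSpace ℝ (Fin d))).symm ▸ edist_lt_top _ _)]
  have hEE : ∀ a b : ℝ, NormedSpace.exp (a • Astar) * NormedSpace.exp (-(b • Astar))
      = NormedSpace.exp ((a - b) • Astar) := by
    intro a b
    have hneg : (-b) • Astar = -(b • Astar) := neg_smul b Astar
    rw [← hneg, hcomm a (-b), show a + -b = a - b from by ring]
  have hP'cont : ContinuousOn (fun τ => Ex τ * ((A τ - Astar) * Φ τ)) (Ici s) :=
    hExcont.continuousOn.mul ((hAcont.sub continuousOn_const).mul hΦcont)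
  -- representation formula
  have key : ∀ t, s ≤ t → Φ t = NormedSpace.exp ((t - s) • Astar)
      + ∫ τ in s..t, NormedSpace.exp ((t - τ) • Astar) * ((A τ - Astar) * Φ τ) := by
    intro t hst
    have huIcc : uIcc s t = Icc s t := uIcc_of_le hst
    have hsub : uIcc s t ⊆ Ici s := by rw [huIcc]; exact Icc_subset_Ici_self
    have hint : IntervalIntegrable (fun τ => Ex τ * ((A τ - Astar) * Φ τ)) volume s t :=
      (hP'cont.mono hsub).intervalIntegrable
    have hftc : ∫ τ in s..t, Ex τ * ((A τ - Astar) * Φ τ) = P t - P s :=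
      integral_eq_sub_of_hasDerivAt (fun τ hτ => hPd τ (hsub hτ)) hint
    set Et := NormedSpace.exp (t • Astar) with hEt_def
    have hmul : ∀ (τ : ℝ) (X : EuclideanSpace ℝ (Fin d) →L[ℝ] EuclideanSpace ℝ (Fin d)),
        Et * (Ex τ * X) = NormedSpace.exp ((t - τ) • Astar) * X := by
      intro τ X
      have h4 : Et * Ex τ * X = Et * (Ex τ * X) := mul_assoc _ _ _
      have h5 : Et * Ex τ = NormedSpace.exp ((t - τ) • Astar) := hEE t τ
      rw [← h4, h5]
    have hPt : Et * P t = Φ t := by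
      have h0 : Et * Ex t = 1 := by
        have h5 := hEE t t
        rw [show t - t = 0 from by ring] at h5
        rw [show (0:ℝ) • Astar = 0 from zero_smul ℝ Astar] at h5
        rw [NormedSpace.exp_zero] at h5
        exact h5
      have h4 : Et * (Ex t * Φ t) = Et * Ex t * Φ t := (mul_assoc _ _ _).symm
      show Et * (Ex t * Φ t) = Φ t
      rw [h4, h0, one_mul]
    have hPs : Et * P s = NormedSpace.exp ((t - s) • Astar) := by
      have h1 : P s = Ex s := by
        show Ex s * Φ s = Ex s
        rw [hΦs]
        exact ContinuousLinearMap.comp_id _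
      rw [h1]
      exact hEE t s
    have hI : Et * (∫ τ in s..t, Ex τ * ((A τ - Astar) * Φ τ))
        = ∫ τ in s..t, NormedSpace.exp ((t - τ) • Astar) * ((A τ - Astar) * Φ τ) := by
      have h6 := (ContinuousLinearMap.mul ℝ
        (EuclideanSpace ℝ (Fin d) →L[ℝ] EuclideanSpace ℝ (Fin d)) Et).intervalIntegral_comp_comm
        hint
      calc Et * (∫ τ in s..t, Ex τ * ((A τ - Astar) * Φ τ))
          = (ContinuousLinearMap.mul ℝ _ Et) (∫ τ in s..t, Ex τ * ((A τ - Astar) * Φ τ)) := rfl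
        _ = ∫ τ in s..t, (ContinuousLinearMap.mul ℝ _ Et) (Ex τ * ((A τ - Astar) * Φ τ)) :=
            h6.symm
        _ = ∫ τ in s..t, NormedSpace.exp ((t - τ) • Astar) * ((A τ - Astar) * Φ τ) :=
            integral_congr fun τ _ => hmul τ _
    have h7 : Et * (P t - P s) = Et * P t - Et * P s := mul_sub _ _ _
    calc Φ t = Et * P t := hPt.symm
      _ = Et * P s + Et * (P t - P s) := by rw [h7]; abel
      _ = _ := by rw [hPs, ← hftc, hI]
  -- integral inequality for u
  have hstar : ∀ t, s ≤ t → u t ≤ Ktil + ∫ τ in s..t, Ktil * k τ * u τ := by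
    intro t hst
    have huIcc : uIcc s t = Icc s t := uIcc_of_le hst
    have hsub : uIcc s t ⊆ Ici s := by rw [huIcc]; exact Icc_subset_Ici_self
    have hExbig : Continuous fun τ : ℝ => NormedSpace.exp ((t - τ) • Astar) :=
      (continuous_iff_continuousAt.mpr fun x =>
        (NormedSpace.exp_analytic (𝕂 := ℝ) x).continuousAt).comp
        ((continuous_const.sub continuous_id).smul continuous_const)
    have hcont1 : ContinuousOn
        (fun τ => ‖NormedSpace.exp ((t - τ) • Astar) * ((A τ - Astar) * Φ τ)‖) (Ici s) :=
      (hExbig.continuousOn.mul ((hAcont.sub continuousOn_const).mul hΦcont)).norm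
    have hcont2 : ContinuousOn
        (fun τ => Ktil * Real.exp (-lam * (t - τ)) * (k τ * ‖Φ τ‖)) (Ici s) := by
      apply ContinuousOn.mul
      · exact (continuous_const.mul (Real.continuous_exp.comp (by fun_prop))).continuousOn
      · exact hkcont.mul hΦcont.norm
    have h2 : ‖∫ τ in s..t, NormedSpace.exp ((t - τ) • Astar) * ((A τ - Astar) * Φ τ)‖
        ≤ ∫ τ in s..t, Ktil * Real.exp (-lam * (t - τ)) * (k τ * ‖Φ τ‖) := by
      refine (intervalIntegral.norm_integral_le_integral_norm hst).trans ?_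
      refine integral_mono_on hst ((hcont1.mono hsub).intervalIntegrable)
        ((hcont2.mono hsub).intervalIntegrable) (fun τ hτ => ?_)
      have hτ1 : (0:ℝ) ≤ t - τ := sub_nonneg.2 hτ.2
      calc ‖NormedSpace.exp ((t - τ) • Astar) * ((A τ - Astar) * Φ τ)‖
          ≤ ‖NormedSpace.exp ((t - τ) • Astar)‖ * ‖(A τ - Astar) * Φ τ‖ := norm_mul_le _ _
        _ ≤ ‖NormedSpace.exp ((t - τ) • Astar)‖ * (k τ * ‖Φ τ‖) :=
            mul_le_mul_of_nonneg_left (norm_mul_le _ _) (norm_nonneg _)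
        _ ≤ Ktil * Real.exp (-lam * (t - τ)) * (k τ * ‖Φ τ‖) :=
            mul_le_mul_of_nonneg_right (hAstar _ hτ1)
              (mul_nonneg (hk0 τ) (norm_nonneg _))
    have h1 : ‖Φ t‖ ≤ Ktil * Real.exp (-lam * (t - s))
        + ∫ τ in s..t, Ktil * Real.exp (-lam * (t - τ)) * (k τ * ‖Φ τ‖) := by
      rw [key t hst]
      refine (norm_add_le _ _).trans (add_le_add (hAstar _ (sub_nonneg.2 hst)) h2)
    have e2 : Real.exp (lam * (t - s))
          * ∫ τ in s..t, Ktil * Real.exp (-lam * (t - τ)) * (k τ * ‖Φ τ‖)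
        = ∫ τ in s..t, Ktil * k τ * u τ := by
      rw [← intervalIntegral.integral_const_mul]
      refine integral_congr fun τ _ => ?_
      have he : Real.exp (lam * (t - s)) * Real.exp (-lam * (t - τ))
          = Real.exp (lam * (τ - s)) := by
        rw [← Real.exp_add]; congr 1; ring
      show Real.exp (lam * (t - s)) * (Ktil * Real.exp (-lam * (t - τ)) * (k τ * ‖Φ τ‖))
          = Ktil * k τ * (Real.exp (lam * (τ - s)) * ‖Φ τ‖)
      calc Real.exp (lam * (t - s)) * (Ktil * Real.exp (-lam * (t - τ)) * (k τ * ‖Φ τ‖))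
          = (Real.exp (lam * (t - s)) * Real.exp (-lam * (t - τ))) * (Ktil * (k τ * ‖Φ τ‖)) :=
            by ring
        _ = Ktil * k τ * (Real.exp (lam * (τ - s)) * ‖Φ τ‖) := by rw [he]; ring
    have e1 : Real.exp (lam * (t - s)) * (Ktil * Real.exp (-lam * (t - s))) = Ktil := by
      rw [show Real.exp (lam * (t - s)) * (Ktil * Real.exp (-lam * (t - s)))
          = (Real.exp (lam * (t - s)) * Real.exp (-lam * (t - s))) * Ktil from by ring,
        ← Real.exp_add, show lam * (t - s) + -lam * (t - s) = 0 from by ring,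
        Real.exp_zero, one_mul]
    calc u t = Real.exp (lam * (t - s)) * ‖Φ t‖ := rfl
      _ ≤ Real.exp (lam * (t - s)) * (Ktil * Real.exp (-lam * (t - s))
            + ∫ τ in s..t, Ktil * Real.exp (-lam * (t - τ)) * (k τ * ‖Φ τ‖)) :=
          mul_le_mul_of_nonneg_left h1 (Real.exp_pos _).le
      _ = Ktil + ∫ τ in s..t, Ktil * k τ * u τ := by rw [mul_add, e1, e2]
  -- Grönwall
  intro t hst
  have huIcc : uIcc s t = Icc s t := uIcc_of_le hst
  have hsub : uIcc s t ⊆ Ici s := by rw [huIcc]; exact Icc_subset_Ici_self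
  have hf2cont : ContinuousOn (fun τ => Ktil * k τ * u τ) (Ici s) :=
    (continuousOn_const.mul hkcont).mul hucont
  set Vf : ℝ → ℝ := fun x => ∫ τ in s..x, k τ with hVf_def
  set w : ℝ → ℝ := fun x => Ktil + ∫ τ in s..x, Ktil * k τ * u τ with hw_def
  set g : ℝ → ℝ := fun x => w x * Real.exp (-(Ktil * Vf x)) with hg_def
  have hVcont : ContinuousOn Vf (Icc s t) := by
    rw [← huIcc]
    exact continuousOn_primitive_interval
      ((hkcont.mono hsub).integrableOn_compact isCompact_uIcc)
  have hwcont : ContinuousOn w (Icc s t) := by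
    rw [← huIcc]
    exact continuousOn_const.add (continuousOn_primitive_interval
      ((hf2cont.mono hsub).integrableOn_compact isCompact_uIcc))
  have hgcont : ContinuousOn g (Icc s t) :=
    hwcont.mul (Real.continuous_exp.comp_continuousOn (hVcont.const_smul Ktil).neg)
  have hder : ∀ x ∈ Ioo s t, HasDerivAt g
      (Real.exp (-(Ktil * Vf x)) * (Ktil * k x * (u x - w x))) x := by
    intro x hx
    have hxs : s < x := hx.1
    have hmem : Ici s ∈ nhds x := Ici_mem_nhds hxs
    have hVd : HasDerivAt Vf (k x) x := by
      refine integral_hasDerivAt_right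
        ((hkcont.mono (by rw [uIcc_of_le hxs.le]; exact Icc_subset_Ici_self)).intervalIntegrable)
        ⟨Ici s, hmem, hkcont.aestronglyMeasurable measurableSet_Ici⟩
        (hkcont.continuousAt hmem)
    have hwd : HasDerivAt w (Ktil * k x * u x) x := by
      refine HasDerivAt.const_add _ ?_
      refine integral_hasDerivAt_right
        ((hf2cont.mono (by rw [uIcc_of_le hxs.le]; exact Icc_subset_Ici_self)).intervalIntegrable)
        ⟨Ici s, hmem, hf2cont.aestronglyMeasurable measurableSet_Ici⟩
        (hf2cont.continuousAt hmem)
    have hEd : HasDerivAt (fun y => Real.exp (-(Ktil * Vf y)))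
        (Real.exp (-(Ktil * Vf x)) * (-(Ktil * k x))) x :=
      (((hVd.const_mul Ktil).neg).exp)
    have hgd := hwd.mul hEd
    exact hgd.congr_deriv (by ring)
  have hanti : AntitoneOn g (Icc s t) := by
    refine antitoneOn_of_deriv_nonpos (convex_Icc s t) hgcont ?_ ?_
    · intro x hx
      rw [interior_Icc] at hx
      exact ((hder x hx).differentiableAt).differentiableWithinAt
    · intro x hx
      rw [interior_Icc] at hx
      rw [(hder x hx).deriv]
      have huw : u x ≤ w x := hstar x hx.1.le
      have h1 : Ktil * k x * (u x - w x) ≤ 0 :=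
        mul_nonpos_of_nonneg_of_nonpos (mul_nonneg hKpos.le (hk0 x)) (sub_nonpos.2 huw)
      exact mul_nonpos_of_nonneg_of_nonpos (Real.exp_pos _).le h1
  have hgs : g s = Ktil := by
    show (Ktil + ∫ τ in s..s, Ktil * k τ * u τ) * Real.exp (-(Ktil * ∫ τ in s..s, k τ)) = Ktil
    simp
  have hgt : w t * Real.exp (-(Ktil * Vf t)) ≤ Ktil := by
    calc w t * Real.exp (-(Ktil * Vf t)) = g t := rfl
      _ ≤ g s := hanti (left_mem_Icc.2 hst) (right_mem_Icc.2 hst) hst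
      _ = Ktil := hgs
  have hwt : w t ≤ Ktil * Real.exp (Ktil * Vf t) := by
    calc w t = (w t * Real.exp (-(Ktil * Vf t))) * Real.exp (Ktil * Vf t) := by
          rw [mul_assoc, ← Real.exp_add, show -(Ktil * Vf t) + Ktil * Vf t = 0 from by ring,
            Real.exp_zero, mul_one]
      _ ≤ Ktil * Real.exp (Ktil * Vf t) :=
          mul_le_mul_of_nonneg_right hgt (Real.exp_pos _).le
  have hVK : Vf t ≤ K₂ := by
    show (∫ τ in s..t, k τ) ≤ K₂
    rw [integral_of_le hst]
    refine le_trans ?_ hAbound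
    exact setIntegral_mono_set hAint (ae_of_all _ hk0)
      (HasSubset.Subset.eventuallyLE (fun x hx => le_of_lt hx.1))
  have hut : u t ≤ Ktil * Real.exp (Ktil * K₂) := by
    refine le_trans (le_trans (hstar t hst) hwt) ?_
    exact mul_le_mul_of_nonneg_left
      (Real.exp_le_exp.2 (mul_le_mul_of_nonneg_left hVK hKpos.le)) hKpos.le
  have hΦeq : Real.exp (-lam * (t - s)) * u t = ‖Φ t‖ := by
    show Real.exp (-lam * (t - s)) * (Real.exp (lam * (t - s)) * ‖Φ t‖) = ‖Φ t‖
    rw [← mul_assoc, ← Real.exp_add, show -lam * (t - s) + lam * (t - s) = 0 from by ring,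
      Real.exp_zero, one_mul]
  rw [← hΦeq]
  calc Real.exp (-lam * (t - s)) * u t
      ≤ Real.exp (-lam * (t - s)) * (Ktil * Real.exp (Ktil * K₂)) :=
        mul_le_mul_of_nonneg_left hut (Real.exp_pos _).le
    _ = Ktil * Real.exp (Ktil * K₂) * Real.exp (-lam * (t - s)) := by ring
end

section
/- Let s ∈ ℝ and let A₀, A₁ : [s,∞) → (d×d real matrices) be continuous. For i = 0,1, let Ψ_i(t,τ), defined for s ≤ τ ≤ t, be the state-transition matrices, i.e., for each fixed τ ≥ s, t ↦ Ψ_i(t,τ) is differentiable with ∂_t Ψ_i(t,τ) = A_i(t) Ψ_i(t,τ) for t ≥ τ, Ψ_i(τ,τ) = I, and Ψ_i(t,τ) = Ψ_i(t,σ)Ψ_i(σ,τ) for τ ≤ σ ≤ t. Suppose there exist constants K₃ ≥ 0 and λ > 0 with ‖Ψ_i(t,τ)‖ ≤ K₃ exp(−λ(t−τ)) for all s ≤ τ ≤ t and i = 0,1, and a constant C ≥ 0 with ‖A₁(τ) − A₀(τ)‖ ≤ C exp(−λ(τ−s)) for all τ ≥ s. Then for all t ≥ s: ‖Ψ₁(t,s)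 − Ψ₀(t,s)‖ ≤ (K₃² C / λ) exp(−λ(t−s)). -/
/-- Perturbation bound for state-transition matrices (Lemma "BoundPhiDiff" core
estimate): if Ψ₀, Ψ₁ are the state-transition matrices of Ẏ = A₀(t)Y and Ẏ = A₁(t)Y,
both satisfying ‖Ψ_i(t,τ)‖ ≤ K₃ exp(−λ(t−τ)), and ‖A₁(τ) − A₀(τ)‖ ≤ C exp(−λ(τ−s)),
then ‖Ψ₁(t,s) − Ψ₀(t,s)‖ ≤ (K₃² C/λ) exp(−λ(t−s)) for all t ≥ s. -/
theorem stmt14 {d : ℕ}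
    (s : ℝ)
    (A₀ A₁ : ℝ → EuclideanSpace ℝ (Fin d) →L[ℝ] EuclideanSpace ℝ (Fin d))
    (hA₀ : ContinuousOn A₀ (Set.Ici s)) (hA₁ : ContinuousOn A₁ (Set.Ici s))
    (Ψ₀ Ψ₁ : ℝ → ℝ → EuclideanSpace ℝ (Fin d) →L[ℝ] EuclideanSpace ℝ (Fin d))
    (hΨ₀init : ∀ τ, s ≤ τ → Ψ₀ τ τ = ContinuousLinearMap.id ℝ (EuclideanSpace ℝ (Fin d)))
    (hΨ₁init : ∀ τ, s ≤ τ → Ψ₁ τ τ = ContinuousLinearMap.id ℝ (EuclideanSpace ℝ (Fin d)))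
    (hΨ₀d : ∀ τ, s ≤ τ → ∀ t, τ ≤ t →
      HasDerivAt (fun t' => Ψ₀ t' τ) (A₀ t ∘L Ψ₀ t τ) t)
    (hΨ₁d : ∀ τ, s ≤ τ → ∀ t, τ ≤ t →
      HasDerivAt (fun t' => Ψ₁ t' τ) (A₁ t ∘L Ψ₁ t τ) t)
    (hΨ₀coc : ∀ τ σ t, s ≤ τ → τ ≤ σ → σ ≤ t → Ψ₀ t τ = Ψ₀ t σ ∘L Ψ₀ σ τ)
    (hΨ₁coc : ∀ τ σ t, s ≤ τ → τ ≤ σ → σ ≤ t → Ψ₁ t τ = Ψ₁ t σ ∘L Ψ₁ σ τ)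
    (K₃ lam : ℝ) (hK₃ : 0 ≤ K₃) (hlam : 0 < lam)
    (hΨ₀bd : ∀ τ t, s ≤ τ → τ ≤ t → ‖Ψ₀ t τ‖ ≤ K₃ * Real.exp (-lam * (t - τ)))
    (hΨ₁bd : ∀ τ t, s ≤ τ → τ ≤ t → ‖Ψ₁ t τ‖ ≤ K₃ * Real.exp (-lam * (t - τ)))
    (C : ℝ) (hC : 0 ≤ C)
    (hdiff : ∀ τ, s ≤ τ → ‖A₁ τ - A₀ τ‖ ≤ C * Real.exp (-lam * (τ - s))) :
    ∀ t, s ≤ t →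
      ‖Ψ₁ t s - Ψ₀ t s‖ ≤ K₃ ^ 2 * C / lam * Real.exp (-lam * (t - s)) := by

  intro t ht
  have hexp1 : ∀ a b : ℝ, a ≤ b → Real.exp (-lam * (b - a)) ≤ 1 := by
    intro a b hab
    rw [Real.exp_le_one_iff]
    nlinarith
  have hΨ₁K : ∀ τ u, s ≤ τ → τ ≤ u → ‖Ψ₁ u τ‖ ≤ K₃ := by
    intro τ u h1 h2
    exact (hΨ₁bd τ u h1 h2).trans (by nlinarith [hexp1 τ u h2, Real.exp_pos (-lam*(u-τ))])
  -- bound on A₁ on [s,t]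
  obtain ⟨M, hM⟩ := (isCompact_Icc (a := s) (b := t)).exists_bound_of_continuousOn
      (hA₁.mono Set.Icc_subset_Ici_self)
  have hM0 : 0 ≤ M := le_trans (norm_nonneg _) (hM s (Set.left_mem_Icc.2 ht))
  -- L1 : near-identity bound
  have L1 : ∀ a b, s ≤ a → a ≤ b → b ≤ t →
      ‖Ψ₁ b a - ContinuousLinearMap.id ℝ (EuclideanSpace ℝ (Fin d))‖ ≤ M * K₃ * (b - a) := by
    intro a b hsa hab hbt
    have key := Convex.norm_image_sub_le_of_norm_hasDerivWithin_le
      (f := fun r => Ψ₁ r a) (f' := fun r => A₁ r ∘L Ψ₁ r a) (s := Set.Icc a b) (C := M * K₃)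
      (fun r hr => (hΨ₁d a hsa r hr.1).hasDerivWithinAt)
      (fun r hr => le_trans (ContinuousLinearMap.opNorm_comp_le _ _)
        (mul_le_mul (hM r ⟨hsa.trans hr.1, hr.2.trans hbt⟩) (hΨ₁K a r hsa hr.1)
          (norm_nonneg _) hM0))
      (convex_Icc a b) (Set.left_mem_Icc.2 hab) (Set.right_mem_Icc.2 hab)
    simp only [hΨ₁init a hsa, Real.norm_eq_abs] at key
    rwa [abs_of_nonneg (by linarith : (0:ℝ) ≤ b - a)] at key
  -- L2 : Lipschitz in the second variable
  have L2 : ∀ a b, s ≤ a → a ≤ b → b ≤ t →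
      ‖Ψ₁ t a - Ψ₁ t b‖ ≤ K₃ * (M * K₃) * (b - a) := by
    intro a b hsa hab hbt
    rw [hΨ₁coc a b t hsa hab hbt]
    have heq : Ψ₁ t b ∘L Ψ₁ b a - Ψ₁ t b
        = Ψ₁ t b ∘L (Ψ₁ b a - ContinuousLinearMap.id ℝ (EuclideanSpace ℝ (Fin d))) := by
      ext v; simp
    rw [heq]
    calc ‖Ψ₁ t b ∘L (Ψ₁ b a - ContinuousLinearMap.id ℝ (EuclideanSpace ℝ (Fin d)))‖
        ≤ ‖Ψ₁ t b‖ * ‖Ψ₁ b a - ContinuousLinearMap.id ℝ (EuclideanSpace ℝ (Fin d))‖ :=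
          ContinuousLinearMap.opNorm_comp_le _ _
      _ ≤ K₃ * (M * K₃ * (b - a)) :=
          mul_le_mul (hΨ₁K b t (hsa.trans hab) hbt) (L1 a b hsa hab hbt) (norm_nonneg _) hK₃
      _ = K₃ * (M * K₃) * (b - a) := by ring
  -- continuity of σ ↦ Ψ₁ t σ on [s,t]
  have contΨ₁t : ContinuousOn (fun σ => Ψ₁ t σ) (Set.Icc s t) := by
    have : LipschitzOnWith (Real.toNNReal (K₃ * (M * K₃))) (fun σ => Ψ₁ t σ) (Set.Icc s t) := by
      rw [lipschitzOnWith_iff_norm_sub_le]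
      intro a ha b hb
      rw [Real.coe_toNNReal _ (by positivity)]
      rcases le_total a b with hab | hab
      · rw [norm_sub_rev]
        calc ‖Ψ₁ t b - Ψ₁ t a‖ = ‖Ψ₁ t a - Ψ₁ t b‖ := (norm_sub_rev _ _)
          _ ≤ K₃ * (M * K₃) * (b - a) := L2 a b ha.1 hab hb.2
          _ ≤ K₃ * (M * K₃) * ‖a - b‖ := by
              rw [Real.norm_eq_abs, abs_sub_comm, abs_of_nonneg (by linarith)]
      · calc ‖Ψ₁ t a - Ψ₁ t b‖ = ‖Ψ₁ t b - Ψ₁ t a‖ := (norm_sub_rev _ _)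
          _ ≤ K₃ * (M * K₃) * (a - b) := L2 b a hb.1 hab ha.2
          _ ≤ K₃ * (M * K₃) * ‖a - b‖ := by
              rw [Real.norm_eq_abs, abs_of_nonneg (by linarith)]
    exact this.continuousOn
  have contΨ₀ : ContinuousOn (fun σ => Ψ₀ σ s) (Set.Icc s t) := fun σ hσ =>
    (hΨ₀d s le_rfl σ hσ.1).continuousAt.continuousWithinAt
  -- L3 : right derivative of σ ↦ Ψ₁ t σ
  have L3 : ∀ σ₀ ∈ Set.Ico s t, HasDerivWithinAt (fun σ => Ψ₁ t σ)
      (-(Ψ₁ t σ₀ ∘L A₁ σ₀)) (Set.Ioi σ₀) σ₀ := by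
    intro σ₀ hσ₀
    rw [hasDerivWithinAt_iff_tendsto_slope' (by simp : σ₀ ∉ Set.Ioi σ₀)]
    have hslope₁ : Filter.Tendsto (slope (fun r => Ψ₁ r σ₀) σ₀) (nhdsWithin σ₀ (Set.Ioi σ₀))
        (nhds (A₁ σ₀)) := by
      have h := ((hΨ₁d σ₀ hσ₀.1 σ₀ le_rfl).hasDerivWithinAt (s := Set.Ioi σ₀))
      rw [hasDerivWithinAt_iff_tendsto_slope' (by simp : σ₀ ∉ Set.Ioi σ₀)] at h
      have he : A₁ σ₀ ∘L Ψ₁ σ₀ σ₀ = A₁ σ₀ := by rw [hΨ₁init σ₀ hσ₀.1]; ext v; simp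
      rwa [he] at h
    have hcont : Filter.Tendsto (fun σ => Ψ₁ t σ) (nhdsWithin σ₀ (Set.Ioi σ₀))
        (nhds (Ψ₁ t σ₀)) := by
      have h := contΨ₁t σ₀ ⟨hσ₀.1, hσ₀.2.le⟩
      rw [← nhdsWithin_Ioc_eq_nhdsGT hσ₀.2]
      exact h.mono_left (nhdsWithin_mono σ₀
        (fun x hx => ⟨hσ₀.1.trans hx.1.le, hx.2⟩))
    have hmain : Filter.Tendsto (fun σ => -(Ψ₁ t σ ∘L slope (fun r => Ψ₁ r σ₀) σ₀ σ))
        (nhdsWithin σ₀ (Set.Ioi σ₀)) (nhds (-(Ψ₁ t σ₀ ∘L A₁ σ₀))) := by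
      have hc : Filter.Tendsto (fun σ => Ψ₁ t σ ∘L slope (fun r => Ψ₁ r σ₀) σ₀ σ)
          (nhdsWithin σ₀ (Set.Ioi σ₀)) (nhds (Ψ₁ t σ₀ ∘L A₁ σ₀)) := by
        have hcomp := ((ContinuousLinearMap.compL ℝ (EuclideanSpace ℝ (Fin d))
          (EuclideanSpace ℝ (Fin d)) (EuclideanSpace ℝ (Fin d))).continuous₂.tendsto
          (Ψ₁ t σ₀, A₁ σ₀)).comp (hcont.prodMk_nhds hslope₁)
        exact hcomp
      exact hc.neg
    refine hmain.congr' (Filter.eventuallyEq_of_mem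
      (Ioc_mem_nhdsGT_of_mem ⟨le_rfl, hσ₀.2⟩) (fun σ hσ => ?_))
    have hcoc := hΨ₁coc σ₀ σ t hσ₀.1 hσ.1.le hσ.2
    rw [slope_def_module, slope_def_module, hΨ₁init σ₀ hσ₀.1, hcoc]
    ext v
    simp [smul_sub, sub_smul, map_sub, map_smul]
  -- derivative of g
  have hg' : ∀ σ₀ ∈ Set.Ioo s t, HasDerivWithinAt (fun σ => Ψ₁ t σ ∘L Ψ₀ σ s)
      (Ψ₁ t σ₀ ∘L ((A₀ σ₀ - A₁ σ₀) ∘L Ψ₀ σ₀ s)) (Set.Ioi σ₀) σ₀ := by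
    intro σ₀ hσ₀
    have h1 := L3 σ₀ ⟨hσ₀.1.le, hσ₀.2⟩
    have h2 := (hΨ₀d s le_rfl σ₀ hσ₀.1.le).hasDerivWithinAt (s := Set.Ioi σ₀)
    have h3 := h1.clm_comp h2
    convert h3 using 1
    simp only [ContinuousLinearMap.comp_sub, ContinuousLinearMap.sub_comp,
      ContinuousLinearMap.neg_comp, ContinuousLinearMap.comp_assoc]
    abel
  -- E, continuity, integrability
  set Ee : ℝ → EuclideanSpace ℝ (Fin d) →L[ℝ] EuclideanSpace ℝ (Fin d) :=
    fun σ => Ψ₁ t σ ∘L ((A₀ σ - A₁ σ) ∘L Ψ₀ σ s) with hEe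
  have contE : ContinuousOn Ee (Set.Icc s t) := by
    apply contΨ₁t.clm_comp
    exact ((hA₀.mono Set.Icc_subset_Ici_self).sub (hA₁.mono Set.Icc_subset_Ici_self)).clm_comp contΨ₀
  have hintE : IntervalIntegrable Ee MeasureTheory.volume s t :=
    (contE.mono (by rw [Set.uIcc_of_le ht])).intervalIntegrable
  have hcontg : ContinuousOn (fun σ => Ψ₁ t σ ∘L Ψ₀ σ s) (Set.Icc s t) :=
    contΨ₁t.clm_comp contΨ₀
  have hFTC := intervalIntegral.integral_eq_sub_of_hasDeriv_right_of_le ht hcontg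
      (fun σ hσ => hg' σ hσ) hintE
  have hgt : Ψ₁ t t ∘L Ψ₀ t s = Ψ₀ t s := by rw [hΨ₁init t ht]; ext v; simp
  have hgs : Ψ₁ t s ∘L Ψ₀ s s = Ψ₁ t s := by rw [hΨ₀init s le_rfl]; ext v; simp
  rw [hgt, hgs] at hFTC
  have hnorm : ‖Ψ₁ t s - Ψ₀ t s‖ = ‖∫ σ in s..t, Ee σ‖ := by
    rw [hFTC, norm_sub_rev]
  -- pointwise bound
  set E0 : ℝ := Real.exp (-lam * (t - s)) with hE0
  have hbound : ∀ σ ∈ Set.Icc s t, ‖Ee σ‖ ≤ K₃^2 * C * E0 * Real.exp (-lam * (σ - s)) := by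
    intro σ hσ
    have h1 : ‖Ee σ‖ ≤ ‖Ψ₁ t σ‖ * (‖A₀ σ - A₁ σ‖ * ‖Ψ₀ σ s‖) := by
      refine le_trans (ContinuousLinearMap.opNorm_comp_le _ _) ?_
      exact mul_le_mul_of_nonneg_left (ContinuousLinearMap.opNorm_comp_le _ _) (norm_nonneg _)
    have h2 : ‖Ψ₁ t σ‖ ≤ K₃ * Real.exp (-lam * (t - σ)) := hΨ₁bd σ t hσ.1 hσ.2
    have h3 : ‖A₀ σ - A₁ σ‖ ≤ C * Real.exp (-lam * (σ - s)) := by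
      rw [norm_sub_rev]; exact hdiff σ hσ.1
    have h4 : ‖Ψ₀ σ s‖ ≤ K₃ * Real.exp (-lam * (σ - s)) := hΨ₀bd s σ le_rfl hσ.1
    have he : Real.exp (-lam * (t - σ)) * Real.exp (-lam * (σ - s)) = E0 := by
      rw [hE0, ← Real.exp_add]; ring_nf
    have hfinal : K₃ * Real.exp (-lam * (t - σ)) *
        (C * Real.exp (-lam * (σ - s)) * (K₃ * Real.exp (-lam * (σ - s))))
        = K₃^2 * C * E0 * Real.exp (-lam * (σ - s)) := by
      linear_combination (K₃^2 * C * Real.exp (-lam * (σ - s))) * he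
    calc ‖Ee σ‖ ≤ ‖Ψ₁ t σ‖ * (‖A₀ σ - A₁ σ‖ * ‖Ψ₀ σ s‖) := h1
      _ ≤ K₃ * Real.exp (-lam * (t - σ)) *
          (C * Real.exp (-lam * (σ - s)) * (K₃ * Real.exp (-lam * (σ - s)))) := by
        have hp1 : (0:ℝ) ≤ C * Real.exp (-lam * (σ - s)) := by positivity
        have hp2 : (0:ℝ) ≤ K₃ * Real.exp (-lam * (t - σ)) := by positivity
        refine mul_le_mul h2 ?_ (by positivity) hp2
        exact mul_le_mul h3 h4 (norm_nonneg _) hp1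
      _ = K₃^2 * C * E0 * Real.exp (-lam * (σ - s)) := hfinal
  -- antiderivative computation
  have hanti : ∀ σ : ℝ, HasDerivAt (fun σ => -lam⁻¹ * Real.exp (-lam * (σ - s)))
      (Real.exp (-lam * (σ - s))) σ := by
    intro σ
    have h1 : HasDerivAt (fun σ : ℝ => -lam * (σ - s)) (-lam) σ := by
      simpa using ((hasDerivAt_id σ).sub_const s).const_mul (-lam)
    have h2 := (Real.hasDerivAt_exp (-lam * (σ - s))).comp σ h1
    have h3 := h2.const_mul (-lam⁻¹)
    refine h3.congr_deriv ?_
    linear_combination (Real.exp (-lam * (σ - s))) * inv_mul_cancel₀ hlam.ne'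
  have hint2 : (∫ σ in s..t, Real.exp (-lam * (σ - s)))
      = (1 - E0) / lam := by
    have hcexp : Continuous (fun σ : ℝ => Real.exp (-lam * (σ - s))) :=
      Real.continuous_exp.comp (continuous_const.mul ((continuous_id.sub continuous_const)))
    rw [intervalIntegral.integral_eq_sub_of_hasDerivAt (fun σ _ => hanti σ)
      (hcexp.intervalIntegrable s t)]
    rw [hE0]
    simp only [sub_self, mul_zero, Real.exp_zero]
    field_simp
    ring
  have hintbd : IntervalIntegrable (fun σ => K₃^2 * C * E0 * Real.exp (-lam * (σ - s)))
      MeasureTheory.volume s t :=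
    ((continuous_const.mul (Real.continuous_exp.comp
      (continuous_const.mul (continuous_id.sub continuous_const)))).intervalIntegrable s t)
  have hnormint : IntervalIntegrable (fun σ => ‖Ee σ‖) MeasureTheory.volume s t :=
    ((contE.mono (by rw [Set.uIcc_of_le ht])).norm).intervalIntegrable
  have step1 : ‖∫ σ in s..t, Ee σ‖ ≤ ∫ σ in s..t, ‖Ee σ‖ :=
    intervalIntegral.norm_integral_le_integral_norm ht
  have step2 : (∫ σ in s..t, ‖Ee σ‖)
      ≤ ∫ σ in s..t, K₃^2 * C * E0 * Real.exp (-lam * (σ - s)) :=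
    intervalIntegral.integral_mono_on ht hnormint hintbd hbound
  have step3 : (∫ σ in s..t, K₃^2 * C * E0 * Real.exp (-lam * (σ - s)))
      = K₃^2 * C * E0 * ((1 - E0) / lam) := by
    rw [← hint2, ← intervalIntegral.integral_const_mul]
  have hE0pos : 0 < E0 := Real.exp_pos _
  have hE0le : E0 ≤ 1 := hexp1 s t ht
  have : ‖Ψ₁ t s - Ψ₀ t s‖ ≤ K₃^2 * C * E0 * ((1 - E0) / lam) := by
    rw [hnorm]
    exact step1.trans (step2.trans_eq step3)
  refine this.trans ?_
  have h2 : K₃^2 * C * E0 * ((1 - E0) / lam) = (K₃^2 * C * E0 * (1 - E0)) / lam := by ring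
  have h3 : K₃ ^ 2 * C / lam * Real.exp (-lam * (t - s)) = (K₃^2 * C * E0) / lam := by
    rw [hE0]; ring
  rw [h2, h3]
  rw [div_le_div_iff_of_pos_right hlam]
  nlinarith [hE0pos, hE0le, sq_nonneg K₃, mul_nonneg (mul_nonneg (sq_nonneg K₃) hC) hE0pos.le]
end

section
/- (Alekseev's formula) Let f : ℝ × ℝ^d → ℝ^d be continuously differentiable and g : ℝ × ℝ^d → ℝ^d be continuous. Let u(t, s, u₀), defined for t ≥ s and u₀ ∈ ℝ^d, be such that for each (s, u₀), t ↦ u(t, s, u₀) is the solution of u̇(t) = f(t, u(t)) with u(s, s, u₀) = u₀, and assume the map (s, u₀) ↦ u(t, s, u₀) is continuously differentiable for each t. For t ≥ s let Φ(t, s, u₀) denote the d×d matrix equal to the derivative of the map u₀ ↦ u(t, s, u₀); equivalently, Φ(·, s, u₀) is the fundamental matrix of the variational system v̇(t) = (∂f/∂u)(t, u(t, s, u₀)) v(t) with Φ(s, s, u₀) = I. Let t₀ ∈ ℝ, p₀ ∈ ℝ^d, and let p : [t₀, T] → ℝ^d be differentiable with ṗ(t) = f(t, p(t)) + g(t, p(t))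 and p(t₀) = p₀. Then for all t ∈ [t₀, T]: p(t) = u(t, t₀, p₀) + ∫_{t₀}^{t} Φ(t, s, p(s)) g(s, p(s)) ds. -/
/-!
Write `F(s, y) = u(t, s, y)`. By uniqueness of solutions, `u` is a two-parameter flow, so
`r ↦ F(r, u(r, σ, x))` is constant on `[σ, t]`; differentiating at `r = σ` shows that the
derivative of `F` at `(σ, x)` kills the direction `(1, f(σ, x))`. Along the perturbed solution `p`
the chain rule therefore leaves only `∂F/∂y (s, p s) · g(s, p s)` as the derivative of
`s ↦ F(s, p s)`, and the fundamental theorem of calculus on `[t₀, t]` gives the formula, since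
`F(t, p t) = p t` and `F(t₀, p₀) = u(t, t₀, p₀)`.
-/

open Set

theorem ODE_solution_unique_of_locallyLipschitz {E : Type*} [NormedAddCommGroup E]
    [NormedSpace ℝ E] {f : ℝ × E → E} (hf : LocallyLipschitz f) {γ₁ γ₂ : ℝ → E} {a b : ℝ}
    (hγ₁ : ContinuousOn γ₁ (Icc a b))
    (hγ₁' : ∀ t ∈ Ico a b, HasDerivWithinAt γ₁ (f (t, γ₁ t)) (Ici t) t)
    (hγ₂ : ContinuousOn γ₂ (Icc a b))
    (hγ₂' : ∀ t ∈ Ico a b, HasDerivWithinAt γ₂ (f (t, γ₂ t)) (Ici t) t)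
    (ha : γ₁ a = γ₂ a) :
    EqOn γ₁ γ₂ (Icc a b) := by
  set S := γ₁ '' Icc a b ∪ γ₂ '' Icc a b
  have hS : IsCompact (Icc a b ×ˢ S) :=
    isCompact_Icc.prod ((isCompact_Icc.image_of_continuousOn hγ₁).union
      (isCompact_Icc.image_of_continuousOn hγ₂))
  obtain ⟨K, hK⟩ := hf.locallyLipschitzOn.exists_lipschitzOnWith_of_compact hS
  have hv : ∀ t ∈ Ico a b, LipschitzOnWith K (fun x => f (t, x)) S := fun t ht => by
    have h := hK.comp (LipschitzWith.prodMk_left t).lipschitzOnWith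
      fun x hx => mk_mem_prod (Ico_subset_Icc_self ht) hx
    rwa [mul_one] at h
  exact ODE_solution_unique_of_mem_Icc_right hv hγ₁ hγ₁'
    (fun t ht => Or.inl (mem_image_of_mem _ (Ico_subset_Icc_self ht))) hγ₂ hγ₂'
    (fun t ht => Or.inr (mem_image_of_mem _ (Ico_subset_Icc_self ht))) ha

theorem HasDerivAt.eq_zero_of_forall_mem_Icc_eq {F : Type*} [NormedAddCommGroup F]
    [NormedSpace ℝ F] {h : ℝ → F} {h' : F} {a b : ℝ} (hh : HasDerivAt h h' a) (hab : a < b)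
    (hconst : ∀ x ∈ Icc a b, h x = h a) :
    h' = 0 :=
  (uniqueDiffOn_Icc hab a (left_mem_Icc.2 hab.le)).eq_deriv _ hh.hasDerivWithinAt
    ((hasDerivWithinAt_const a _ (h a)).congr hconst rfl)

theorem DifferentiableAt.fderiv_comp_prodMk_right {𝕜 E F G : Type*} [NontriviallyNormedField 𝕜]
    [NormedAddCommGroup E] [NormedSpace 𝕜 E] [NormedAddCommGroup F] [NormedSpace 𝕜 F]
    [NormedAddCommGroup G] [NormedSpace 𝕜 G] {Φ : E × F → G} {a : E} {b : F}
    (hΦ : DifferentiableAt 𝕜 Φ (a, b)) :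
    fderiv 𝕜 (fun y => Φ (a, y)) b = (fderiv 𝕜 Φ (a, b)).comp (.inr 𝕜 E F) :=
  (hΦ.hasFDerivAt.comp b (hasFDerivAt_prodMk_right a b)).fderiv

theorem ContDiff.continuousOn_fderiv_comp_prodMk_right_apply {𝕜 X E F G : Type*}
    [NontriviallyNormedField 𝕜] [TopologicalSpace X]
    [NormedAddCommGroup E] [NormedSpace 𝕜 E] [NormedAddCommGroup F] [NormedSpace 𝕜 F]
    [NormedAddCommGroup G] [NormedSpace 𝕜 G] {Φ : E × F → G} (hΦ : ContDiff 𝕜 1 Φ)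
    {a : X → E} {b c : X → F} {s : Set X} (ha : ContinuousOn a s) (hb : ContinuousOn b s)
    (hc : ContinuousOn c s) :
    ContinuousOn (fun x => fderiv 𝕜 (fun y => Φ (a x, y)) (b x) (c x)) s := by
  simp_rw [((hΦ.differentiable one_ne_zero) _).fderiv_comp_prodMk_right,
    ContinuousLinearMap.comp_apply, ContinuousLinearMap.inr_apply]
  exact isBoundedBilinearMap_apply.continuous.comp_continuousOn
    (((hΦ.continuous_fderiv one_ne_zero).comp_continuousOn (ha.prodMk hb)).prodMk
      (continuousOn_const.prodMk hc))

section Flow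

variable {E : Type*} [NormedAddCommGroup E] [NormedSpace ℝ E] {f : ℝ × E → E}
  {u : ℝ → ℝ → E → E}

theorem flow_comp (hf : LocallyLipschitz f) (huinit : ∀ s x, u s s x = x)
    (huderiv : ∀ s x, ∀ t, s ≤ t → HasDerivAt (fun τ => u τ s x) (f (t, u t s x)) t)
    {s σ τ : ℝ} (x : E) (hsσ : s ≤ σ) (hστ : σ ≤ τ) :
    u τ σ (u σ s x) = u τ s x :=
  ODE_solution_unique_of_locallyLipschitz hf
    (fun r hr => (huderiv σ _ r hr.1).continuousAt.continuousWithinAt)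
    (fun r hr => (huderiv σ _ r hr.1).hasDerivWithinAt)
    (fun r hr => (huderiv s x r (hsσ.trans hr.1)).continuousAt.continuousWithinAt)
    (fun r hr => (huderiv s x r (hsσ.trans hr.1)).hasDerivWithinAt)
    (huinit σ _) (right_mem_Icc.2 hστ)

theorem fderiv_flow_apply_vectorField_eq_zero (hf : LocallyLipschitz f)
    (huinit : ∀ s x, u s s x = x)
    (huderiv : ∀ s x, ∀ t, s ≤ t → HasDerivAt (fun τ => u τ s x) (f (t, u t s x)) t)
    {t σ : ℝ} {x : E} (hdiff : DifferentiableAt ℝ (fun q : ℝ × E => u t q.1 q.2) (σ, x))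
    (hσt : σ < t) :
    fderiv ℝ (fun q : ℝ × E => u t q.1 q.2) (σ, x) (1, f (σ, x)) = 0 := by
  have hγ : HasDerivAt (fun r => u r σ x) (f (σ, x)) σ := by
    simpa only [huinit] using huderiv σ x σ le_rfl
  have hcurve : HasDerivAt (fun r => u t r (u r σ x))
      (fderiv ℝ (fun q : ℝ × E => u t q.1 q.2) (σ, x) (1, f (σ, x))) σ :=
    hdiff.hasFDerivAt.comp_hasDerivAt_of_eq σ ((hasDerivAt_id σ).prodMk hγ) (by simp [huinit])
  refine hcurve.eq_zero_of_forall_mem_Icc_eq hσt fun r hr => ?_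
  rw [flow_comp hf huinit huderiv x hr.1 hr.2, huinit]

theorem hasDerivAt_flow_comp_perturbed (hf : LocallyLipschitz f) (huinit : ∀ s x, u s s x = x)
    (huderiv : ∀ s x, ∀ t, s ≤ t → HasDerivAt (fun τ => u τ s x) (f (t, u t s x)) t)
    {t s : ℝ} {p : ℝ → E} {w : E}
    (hdiff : DifferentiableAt ℝ (fun q : ℝ × E => u t q.1 q.2) (s, p s)) (hst : s < t)
    (hp : HasDerivAt p (f (s, p s) + w) s) :
    HasDerivAt (fun r => u t r (p r)) (fderiv ℝ (u t s) (p s) w) s := by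
  have hsplit : ((1 : ℝ), f (s, p s) + w) = (1, f (s, p s)) + (0, w) := by simp
  have hpartial : fderiv ℝ (fun q : ℝ × E => u t q.1 q.2) (s, p s) (0, w) =
      fderiv ℝ (u t s) (p s) w :=
    (DFunLike.congr_fun hdiff.fderiv_comp_prodMk_right w).symm
  have hchain := hdiff.hasFDerivAt.comp_hasDerivAt s ((hasDerivAt_id s).prodMk hp)
  rwa [hsplit, map_add, fderiv_flow_apply_vectorField_eq_zero hf huinit huderiv hdiff hst,
    zero_add, hpartial] at hchain

end Flow

/-- Alekseev's formula: let f be C¹ and g continuous, let u(t, s, u₀) be the solution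
of u̇ = f(t, u) with u(s, s, u₀) = u₀, depending in a C¹ manner on (s, u₀), and let
Φ(t, s, u₀) be the derivative of u₀ ↦ u(t, s, u₀) (the fundamental matrix of the
variational system). If p solves ṗ(t) = f(t, p(t)) + g(t, p(t)) on [t₀, T] with
p(t₀) = p₀, then p(t) = u(t, t₀, p₀) + ∫_{t₀}^t Φ(t, s, p(s)) g(s, p(s)) ds. -/
theorem stmt15 {d : ℕ}
    (f : ℝ × EuclideanSpace ℝ (Fin d) → EuclideanSpace ℝ (Fin d))
    (hf : ContDiff ℝ 1 f)
    (g : ℝ × EuclideanSpace ℝ (Fin d) → EuclideanSpace ℝ (Fin d))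
    (hg : Continuous g)
    (u : ℝ → ℝ → EuclideanSpace ℝ (Fin d) → EuclideanSpace ℝ (Fin d))
    (huinit : ∀ (s : ℝ) (u₀ : EuclideanSpace ℝ (Fin d)), u s s u₀ = u₀)
    (huderiv : ∀ (s : ℝ) (u₀ : EuclideanSpace ℝ (Fin d)), ∀ t, s ≤ t →
      HasDerivAt (fun τ => u τ s u₀) (f (t, u t s u₀)) t)
    (husmooth : ∀ t : ℝ,
      ContDiff ℝ 1 (fun p : ℝ × EuclideanSpace ℝ (Fin d) => u t p.1 p.2))
    (t₀ T : ℝ) (p₀ : EuclideanSpace ℝ (Fin d))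
    (p : ℝ → EuclideanSpace ℝ (Fin d))
    (hp₀ : p t₀ = p₀)
    (hpderiv : ∀ t ∈ Set.Icc t₀ T, HasDerivAt p (f (t, p t) + g (t, p t)) t) :
    ∀ t ∈ Set.Icc t₀ T,
      p t = u t t₀ p₀ + ∫ s in t₀..t, (fderiv ℝ (u t s) (p s)) (g (s, p s)) := by
  rintro t ⟨ht₀, htT⟩
  have hF := husmooth t
  have hp : ContinuousOn p (Icc t₀ t) := fun s hs =>
    (hpderiv s ⟨hs.1, hs.2.trans htT⟩).continuousAt.continuousWithinAt
  have hcont : ContinuousOn (fun s => u t s (p s)) (Icc t₀ t) :=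
    hF.continuous.comp_continuousOn (continuousOn_id.prodMk hp)
  have hderiv : ∀ s ∈ Ioo t₀ t, HasDerivWithinAt (fun r => u t r (p r))
      (fderiv ℝ (u t s) (p s) (g (s, p s))) (Ioi s) s := fun s hs =>
    (hasDerivAt_flow_comp_perturbed hf.locallyLipschitz huinit huderiv
      (hF.differentiable one_ne_zero _) hs.2
      (hpderiv s ⟨hs.1.le, hs.2.le.trans htT⟩)).hasDerivWithinAt
  have hint : ContinuousOn (fun s => fderiv ℝ (u t s) (p s) (g (s, p s))) (Icc t₀ t) :=
    hF.continuousOn_fderiv_comp_prodMk_right_apply continuousOn_id hp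
      (hg.comp_continuousOn (continuousOn_id.prodMk hp))
  rw [intervalIntegral.integral_eq_sub_of_hasDeriv_right_of_le ht₀ hcont hderiv
    (hint.intervalIntegrable_of_Icc ht₀), huinit, hp₀]
  abel
end

section
/- Let λ > 0 and let {a_k}_{k≥0} be a sequence of real numbers with 0 < a_k ≤ 1 for all k. Define t_0 = 0 and t_{n+1} = t_n + a_n. Then for all integers 0 ≤ n₀ ≤ n: Σ_{k=n₀}^{n−1} exp(−λ (t_n − t_{k+1})) · a_k ≤ e^λ / λ. -/
/-! With `g k = e^λ/λ · exp(-λ (t_n - t_k))`, each summand is at most the increment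
`g (k+1) - g k`, because `λ a ≤ e^{λ a} - 1` and `e^{λ a} ≤ e^λ` for `0 ≤ a ≤ 1`.
The sum therefore telescopes to at most `g n - g n₀ ≤ g n = e^λ/λ`. -/

open Real

lemma le_exp_div_mul_one_sub_exp_neg {lam x : ℝ} (hlam : 0 < lam) (hx₀ : 0 ≤ x) (hx₁ : x ≤ 1) :
    x ≤ exp lam / lam * (1 - exp (-(lam * x))) := by
  have hgap : 0 ≤ 1 - exp (-(lam * x)) := by
    rw [sub_nonneg, exp_le_one_iff, neg_nonpos]
    positivity
  have hexp_sub_one : exp (lam * x) - 1 = exp (lam * x) * (1 - exp (-(lam * x))) := by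
    rw [mul_sub, mul_one, ← exp_add, add_neg_cancel, exp_zero]
  calc x = lam * x / lam := by field_simp
    _ ≤ (exp (lam * x) - 1) / lam := by
        gcongr
        linarith [add_one_le_exp (lam * x)]
    _ = exp (lam * x) / lam * (1 - exp (-(lam * x))) := by rw [hexp_sub_one, div_mul_eq_mul_div]
    _ ≤ exp lam / lam * (1 - exp (-(lam * x))) := by
        gcongr
        nlinarith

lemma exp_neg_mul_mul_le_sub {lam x : ℝ} (hlam : 0 < lam) (hx₀ : 0 ≤ x) (hx₁ : x ≤ 1) (d : ℝ) :
    exp (-lam * d) * x ≤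
      exp lam / lam * exp (-lam * d) - exp lam / lam * exp (-lam * (d + x)) := by
  have hsplit : exp (-lam * (d + x)) = exp (-lam * d) * exp (-(lam * x)) := by
    rw [← exp_add]
    ring_nf
  calc exp (-lam * d) * x
      ≤ exp (-lam * d) * (exp lam / lam * (1 - exp (-(lam * x)))) :=
        mul_le_mul_of_nonneg_left (le_exp_div_mul_one_sub_exp_neg hlam hx₀ hx₁) (exp_pos _).le
    _ = _ := by rw [hsplit]; ring

lemma sum_Ico_le_of_le_sub {f g : ℕ → ℝ} {n₀ n : ℕ} (hn : n₀ ≤ n)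
    (hfg : ∀ k ∈ Finset.Ico n₀ n, f k ≤ g (k + 1) - g k) (hg : 0 ≤ g n₀) :
    ∑ k ∈ Finset.Ico n₀ n, f k ≤ g n :=
  calc ∑ k ∈ Finset.Ico n₀ n, f k ≤ ∑ k ∈ Finset.Ico n₀ n, (g (k + 1) - g k) :=
        Finset.sum_le_sum hfg
    _ = g n - g n₀ := Finset.sum_Ico_sub g hn
    _ ≤ g n := sub_le_self _ hg

theorem stmt16_general (lam : ℝ) (hlam : 0 < lam) (a : ℕ → ℝ)
    (ha : ∀ k, 0 < a k ∧ a k ≤ 1)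
    (t : ℕ → ℝ) (ht : ∀ n, t (n + 1) = t n + a n) :
    ∀ n₀ n : ℕ, n₀ ≤ n →
      ∑ k ∈ Finset.Ico n₀ n, Real.exp (-lam * (t n - t (k + 1))) * a k ≤
        Real.exp lam / lam := by
  intro n₀ n hn
  set g : ℕ → ℝ := fun k => exp lam / lam * exp (-lam * (t n - t k))
  have hstep : ∀ k ∈ Finset.Ico n₀ n,
      exp (-lam * (t n - t (k + 1))) * a k ≤ g (k + 1) - g k := fun k _ => by
    have hdiff : t n - t k = t n - t (k + 1) + a k := by rw [ht k]; ring
    simpa only [g, hdiff] using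
      exp_neg_mul_mul_le_sub hlam (ha k).1.le (ha k).2 (t n - t (k + 1))
  calc ∑ k ∈ Finset.Ico n₀ n, exp (-lam * (t n - t (k + 1))) * a k ≤ g n :=
        sum_Ico_le_of_le_sub hn hstep (by positivity)
    _ = exp lam / lam := by simp [g]

/-- Let λ > 0 and let {a_k} be a sequence of reals with 0 < a_k ≤ 1. Define t_0 = 0 and
t_{n+1} = t_n + a_n. Then for all 0 ≤ n₀ ≤ n,
Σ_{k=n₀}^{n−1} exp(−λ (t_n − t_{k+1})) · a_k ≤ e^λ / λ. -/
theorem stmt16 (lam : ℝ) (hlam : 0 < lam) (a : ℕ → ℝ)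
    (ha : ∀ k, 0 < a k ∧ a k ≤ 1)
    (t : ℕ → ℝ) (ht0 : t 0 = 0) (ht : ∀ n, t (n + 1) = t n + a n) :
    ∀ n₀ n : ℕ, n₀ ≤ n →
      ∑ k ∈ Finset.Ico n₀ n, Real.exp (-lam * (t n - t (k + 1))) * a k ≤
        Real.exp lam / lam :=
  stmt16_general lam hlam a ha t ht
end

section
/- Let h : ℝ^d → ℝ^d be continuous, let U ⊆ ℝ^d be open, and let V : U → ℝ be continuously differentiable. Let 0 < r' < r be such that V^r := {x ∈ U : V(x) ≤ r} is compact, and suppose there is a constant c > 0 with ∇V(x)·h(x) ≤ −c for all x ∈ V^r with V(x) > r'. Let s ∈ ℝ and let x : [s,∞) → U be differentiable with x'(t) = h(x(t)) and x(t) ∈ V^r for all t ≥ s. Set 𝒯 = (r − r')/c. Then V(x(t)) ≤ r' for all t ≥ s + 𝒯; in particular, x(t) ∈ V^{r'} := {x ∈ U : V(x) ≤ r'} for all t ≥ s + 𝒯. -/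
/-! Along the trajectory, `φ t = V (γ t)` has derivative `∇V(γ t) · h(γ t)`, which is `≤ -c`
whenever `r' < φ t`. If `φ` never drops to `r'` on `[s, t]`, it decreases at rate at least `c`
from `φ s ≤ r`, so after time `(r - r') / c` it is `≤ r'` after all; once `φ` is at or below
`r'`, it can never cross back above that level. -/

open Set

theorem HasGradientAt.comp_hasDerivAt {F : Type*} [NormedAddCommGroup F] [InnerProductSpace ℝ F]
    [CompleteSpace F] {V : F → ℝ} {g : F} {γ : ℝ → F} {γ' : F} {t : ℝ}
    (hV : HasGradientAt V g (γ t)) (hγ : HasDerivAt γ γ' t) :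
    HasDerivAt (V ∘ γ) (inner ℝ g γ') t := by
  simpa using hV.hasFDerivAt.comp_hasDerivAt t hγ

theorem image_le_of_hasDerivAt_neg_of_gt {f f' : ℝ → ℝ} {a b m : ℝ}
    (hf : ∀ x ∈ Icc a b, HasDerivAt f (f' x) x) (ha : f a ≤ m)
    (hneg : ∀ x ∈ Ico a b, m < f x → f' x < 0) : ∀ x ∈ Icc a b, f x ≤ m := by
  intro x hx
  -- The fence `m + ε` is crossed only where `f = m + ε > m`, i.e. where `f` is decreasing.
  refine le_of_forall_pos_le_add fun ε hε => ?_
  exact image_le_of_deriv_right_lt_deriv_boundary (B := fun _ => m + ε) (B' := 0)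
    (fun y hy => (hf y hy).continuousAt.continuousWithinAt)
    (fun y hy => (hf y (Ico_subset_Icc_self hy)).hasDerivWithinAt) (by linarith)
    (fun _ => hasDerivAt_const _ _) (fun y hy hfy => hneg y hy (by linarith)) hx

theorem image_le_sub_mul_of_hasDerivAt_le {f f' : ℝ → ℝ} {a b c : ℝ}
    (hf : ∀ x ∈ Icc a b, HasDerivAt f (f' x) x) (hle : ∀ x ∈ Ico a b, f' x ≤ -c) (hab : a ≤ b) :
    f b ≤ f a - c * (b - a) := by
  have hB : ∀ x, HasDerivAt (fun x => f a - c * (x - a)) (-c) x := fun x => by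
    simpa using (((hasDerivAt_id x).sub_const a).const_mul c).const_sub (f a)
  exact image_le_of_deriv_right_le_deriv_boundary
    (fun x hx => (hf x hx).continuousAt.continuousWithinAt)
    (fun x hx => (hf x (Ico_subset_Icc_self hx)).hasDerivWithinAt) (by simp)
    (fun x _ => (hB x).continuousAt.continuousWithinAt) (fun x _ => (hB x).hasDerivWithinAt)
    hle ⟨hab, le_rfl⟩

theorem image_le_of_hasDerivAt_le_neg_of_gt {f f' : ℝ → ℝ} {a m M c t : ℝ} (hc : 0 < c)
    (hf : ∀ x, a ≤ x → HasDerivAt f (f' x) x) (ha : f a ≤ M)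
    (hdec : ∀ x, a ≤ x → m < f x → f' x ≤ -c) (hat : a ≤ t) (ht : a + (M - m) / c ≤ t) :
    f t ≤ m := by
  by_cases hhit : ∃ u ∈ Icc a t, f u ≤ m
  · obtain ⟨u, hu, hfu⟩ := hhit
    exact image_le_of_hasDerivAt_neg_of_gt (fun x hx => hf x (hu.1.trans hx.1)) hfu
      (fun x hx hfx => (hdec x (hu.1.trans hx.1) hfx).trans_lt (neg_lt_zero.2 hc))
      t ⟨hu.2, le_rfl⟩
  · push Not at hhit
    have hdrop : M - m ≤ c * (t - a) := by
      rw [← div_le_iff₀' hc]; linarith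
    have := image_le_sub_mul_of_hasDerivAt_le (fun x hx => hf x hx.1)
      (fun x hx => hdec x hx.1 (hhit x (Ico_subset_Icc_self hx))) hat
    linarith

theorem stmt17_general {d : ℕ}
    (h : EuclideanSpace ℝ (Fin d) → EuclideanSpace ℝ (Fin d))
    (U : Set (EuclideanSpace ℝ (Fin d))) (hU : IsOpen U)
    (V : EuclideanSpace ℝ (Fin d) → ℝ) (hV : ContDiffOn ℝ 1 V U)
    (r' r : ℝ) (hr'r : r' < r)
    (c : ℝ) (hc : 0 < c)
    (hdec : ∀ x ∈ U, V x ≤ r → r' < V x → (inner ℝ (gradient V x) (h x) : ℝ) ≤ -c)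
    (s : ℝ) (γ : ℝ → EuclideanSpace ℝ (Fin d))
    (hγmem : ∀ t, s ≤ t → γ t ∈ {x ∈ U | V x ≤ r})
    (hγd : ∀ t, s ≤ t → HasDerivAt γ (h (γ t)) t) :
    ∀ t, s + (r - r') / c ≤ t → V (γ t) ≤ r' ∧ γ t ∈ {x ∈ U | V x ≤ r'} := by
  intro t ht
  have hst : s ≤ t := by linarith [div_pos (sub_pos.2 hr'r) hc]
  have hVγ : ∀ u, s ≤ u → HasDerivAt (V ∘ γ) (inner ℝ (gradient V (γ u)) (h (γ u))) u :=
    fun u hu => ((hV.differentiableOn one_ne_zero).differentiableAt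
      (hU.mem_nhds (hγmem u hu).1)).hasGradientAt.comp_hasDerivAt (hγd u hu)
  have hle : V (γ t) ≤ r' := image_le_of_hasDerivAt_le_neg_of_gt hc hVγ (hγmem s le_rfl).2
    (fun u hu hgt => hdec _ (hγmem u hu).1 (hγmem u hu).2 hgt) hst ht
  exact ⟨hle, (hγmem t hst).1, hle⟩

/-- Let h be continuous, U open, V : U → ℝ C¹, 0 < r' < r with V^r compact, and suppose
∇V(x)·h(x) ≤ −c (c > 0) for all x ∈ V^r with V(x) > r'. If γ solves γ̇ = h(γ) on [s,∞)
and stays in V^r, then with 𝒯 = (r − r')/c, V(γ(t)) ≤ r' for all t ≥ s + 𝒯; in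
particular γ(t) ∈ V^{r'} for all t ≥ s + 𝒯. -/
theorem stmt17 {d : ℕ}
    (h : EuclideanSpace ℝ (Fin d) → EuclideanSpace ℝ (Fin d))
    (hh : Continuous h)
    (U : Set (EuclideanSpace ℝ (Fin d))) (hU : IsOpen U)
    (V : EuclideanSpace ℝ (Fin d) → ℝ) (hV : ContDiffOn ℝ 1 V U)
    (r' r : ℝ) (hr'pos : 0 < r') (hr'r : r' < r)
    (hcomp : IsCompact {x ∈ U | V x ≤ r})
    (c : ℝ) (hc : 0 < c)
    (hdec : ∀ x ∈ U, V x ≤ r → r' < V x → (inner ℝ (gradient V x) (h x) : ℝ) ≤ -c)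
    (s : ℝ) (γ : ℝ → EuclideanSpace ℝ (Fin d))
    (hγmem : ∀ t, s ≤ t → γ t ∈ {x ∈ U | V x ≤ r})
    (hγd : ∀ t, s ≤ t → HasDerivAt γ (h (γ t)) t) :
    ∀ t, s + (r - r') / c ≤ t → V (γ t) ≤ r' ∧ γ t ∈ {x ∈ U | V x ≤ r'} :=
  stmt17_general h U hU V hV r' r hr'r c hc hdec s γ hγmem hγd
end

section
/- Let a_k = 1/(k+1)^μ for k ≥ 0, and suppose either (i) μ ∈ (0,1) and λ > 0, or (ii) μ = 1 and λ > 1. Then there exists an integer N such that for all integers n₀ ≥ N and all n ≥ n₀ + 1: exp(−λ a_{k+1}) a_k ≤ a_{k+1} for every k ≥ n₀, and consequently max_{n₀ ≤ k ≤ n−1} [ exp(−λ Σ_{i=k+1}^{n−1} a_i) · a_k ] = a_{n−1} = 1/n^μ. -/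
open Real Filter Finset

/-- Let a_k = 1/(k+1)^μ, and suppose (i) μ ∈ (0,1) and λ > 0, or (ii) μ = 1 and λ > 1.
Then there exists N such that for all n₀ ≥ N and all n ≥ n₀ + 1:
exp(−λ a_{k+1}) a_k ≤ a_{k+1} for every k ≥ n₀, and consequently
max_{n₀ ≤ k ≤ n−1} [exp(−λ Σ_{i=k+1}^{n−1} a_i) a_k] = a_{n−1} = 1/n^μ. -/
theorem stmt18 (mu lam : ℝ) (a : ℕ → ℝ)
    (ha : ∀ k : ℕ, a k = 1 / ((k : ℝ) + 1) ^ mu)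
    (hcase : (0 < mu ∧ mu < 1 ∧ 0 < lam) ∨ (mu = 1 ∧ 1 < lam)) :
    ∃ N : ℕ, ∀ n₀ : ℕ, N ≤ n₀ → ∀ n : ℕ, n₀ + 1 ≤ n →
      (∀ k : ℕ, n₀ ≤ k → Real.exp (-lam * a (k + 1)) * a k ≤ a (k + 1)) ∧
      IsGreatest
        ((fun k => Real.exp (-lam * ∑ i ∈ Finset.Icc (k + 1) (n - 1), a i) * a k) ''
          Set.Icc n₀ (n - 1)) (a (n - 1)) ∧
      a (n - 1) = 1 / (n : ℝ) ^ mu := by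
  have hmu0 : 0 < mu := by
    rcases hcase with ⟨h, _, _⟩ | ⟨h, _⟩
    · exact h
    · rw [h]; norm_num
  have hmu1 : mu ≤ 1 := by
    rcases hcase with ⟨_, h, _⟩ | ⟨h, _⟩
    · linarith
    · rw [h]
  have hlam : 0 < lam := by rcases hcase with ⟨_, _, h⟩ | ⟨_, h⟩ <;> linarith
  -- eventual key inequality
  have hEv : ∀ᶠ k : ℕ in atTop, mu * ((k : ℝ) + 2) ^ mu ≤ lam * ((k : ℝ) + 1) := by
    rcases hcase with ⟨hmu0', hmu1', hlam'⟩ | ⟨hmu, hlam'⟩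
    · have T : Tendsto (fun k : ℕ => ((k : ℝ) + 2) ^ (1 - mu)) atTop atTop :=
        (tendsto_rpow_atTop (by linarith)).comp
          (tendsto_atTop_add_const_right _ 2 tendsto_natCast_atTop_atTop)
      filter_upwards [T.eventually_ge_atTop (2 * mu / lam)] with k hk
      set y : ℝ := (k : ℝ) + 2 with hy'
      have hy : (0 : ℝ) < y := by positivity
      have hk' : 2 * mu ≤ lam * y ^ (1 - mu) := by
        rw [div_le_iff₀ hlam] at hk; linarith [hk]
      have hyp : (0 : ℝ) < y ^ mu := Real.rpow_pos_of_pos hy _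
      have hmul : y ^ (1 - mu) * y ^ mu = y := by
        rw [← Real.rpow_add hy]; norm_num
      have h2 : 2 * mu * y ^ mu ≤ lam * y := by
        calc 2 * mu * y ^ mu ≤ lam * y ^ (1 - mu) * y ^ mu :=
              mul_le_mul_of_nonneg_right hk' hyp.le
          _ = lam * y := by rw [mul_assoc, hmul]
      have hk0 : (0 : ℝ) ≤ (k : ℝ) := Nat.cast_nonneg k
      nlinarith [mul_nonneg hlam.le hk0, hyp]
    · have T : Tendsto (fun k : ℕ => (lam - 1) * ((k : ℝ) + 1)) atTop atTop := by
        apply Tendsto.const_mul_atTop (by linarith)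
        exact tendsto_atTop_add_const_right _ 1 tendsto_natCast_atTop_atTop
      filter_upwards [T.eventually_ge_atTop 1] with k hk
      rw [hmu, Real.rpow_one, one_mul]
      nlinarith [hk]
  obtain ⟨N, hN⟩ := eventually_atTop.1 hEv
  -- pointwise inequality
  have hpt : ∀ k : ℕ, N ≤ k → Real.exp (-lam * a (k + 1)) * a k ≤ a (k + 1) := by
    intro k hk
    have hkey := hN k hk
    rw [ha k, ha (k + 1)]
    push_cast
    set x : ℝ := (k : ℝ) + 1 with hx'
    have hxy : ((k : ℝ) + 1 + 1) = x + 1 := by ring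
    rw [hxy]
    set y : ℝ := x + 1 with hy'
    have hx : (0 : ℝ) < x := by positivity
    have hy : (0 : ℝ) < y := by positivity
    have hky : y = (k : ℝ) + 2 := by rw [hy', hx']; ring
    have hxp : (0 : ℝ) < x ^ mu := Real.rpow_pos_of_pos hx _
    have hyp : (0 : ℝ) < y ^ mu := Real.rpow_pos_of_pos hy _
    have hkey' : mu * y ^ mu ≤ lam * x := by rw [hky]; rw [hx'] at hkey ⊢; exact hkey
    -- Bernoulli: (y/x)^mu ≤ 1 + mu/x
    have hB : (y / x) ^ mu ≤ 1 + mu * (1 / x) := by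
      have : y / x = 1 + 1 / x := by field_simp; exact hy'
      rw [this]
      exact rpow_one_add_le_one_add_mul_self (le_trans (by norm_num) (by positivity : (0:ℝ) ≤ 1 / x)) hmu0.le hmu1
    have hE : mu * (1 / x) ≤ lam * (1 / y ^ mu) := by
      rw [mul_one_div, mul_one_div, div_le_div_iff₀ hx hyp]
      linarith [hkey']
    have hexp : 1 + lam * (1 / y ^ mu) ≤ Real.exp (lam * (1 / y ^ mu)) := by
      linarith [Real.add_one_le_exp (lam * (1 / y ^ mu))]
    have hchain : y ^ mu / x ^ mu ≤ Real.exp (lam * (1 / y ^ mu)) := by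
      rw [← Real.div_rpow hy.le hx.le]
      linarith [hB, hE, hexp]
    have hfin : y ^ mu ≤ Real.exp (lam * (1 / y ^ mu)) * x ^ mu := by
      rw [div_le_iff₀ hxp] at hchain; linarith
    rw [show -lam * (1 / y ^ mu) = -(lam * (1 / y ^ mu)) by ring, Real.exp_neg]
    calc (Real.exp (lam * (1 / y ^ mu)))⁻¹ * (1 / x ^ mu)
        = 1 / (Real.exp (lam * (1 / y ^ mu)) * x ^ mu) := by
          field_simp
      _ ≤ 1 / y ^ mu := one_div_le_one_div_of_le hyp hfin
  refine ⟨N, fun n₀ hn₀ n hn => ?_⟩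
  have hpt' : ∀ k : ℕ, n₀ ≤ k → Real.exp (-lam * a (k + 1)) * a k ≤ a (k + 1) :=
    fun k hk => hpt k (le_trans hn₀ hk)
  set m := n - 1 with hmdef
  have hm : n₀ ≤ m := by omega
  have hmn : m + 1 = n := by omega
  set f : ℕ → ℝ := fun k => Real.exp (-lam * ∑ i ∈ Finset.Icc (k + 1) m, a i) * a k with hf
  have hfm : f m = a m := by
    simp [hf, Finset.Icc_eq_empty (by omega : ¬ m + 1 ≤ m)]
  have hstep : ∀ k : ℕ, n₀ ≤ k → k + 1 ≤ m → f k ≤ f (k + 1) := by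
    intro k hk hk1
    have hins : Finset.Icc (k + 1) m = insert (k + 1) (Finset.Icc (k + 2) m) := by
      symm
      rw [show k + 2 = (k + 1) + 1 from rfl, Finset.Icc_add_one_left_eq_Ioc]
      exact Finset.Ioc_insert_left hk1
    have hsum : ∑ i ∈ Finset.Icc (k + 1) m, a i
        = a (k + 1) + ∑ i ∈ Finset.Icc (k + 2) m, a i := by
      rw [hins, Finset.sum_insert (by simp)]
    set S := ∑ i ∈ Finset.Icc (k + 2) m, a i with hS
    have h1 : f k = Real.exp (-lam * S) * (Real.exp (-lam * a (k + 1)) * a k) := by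
      rw [hf]; simp only []
      rw [hsum, show -lam * (a (k + 1) + S) = -lam * S + -lam * a (k + 1) by ring,
        Real.exp_add]
      ring
    have h2 : f (k + 1) = Real.exp (-lam * S) * a (k + 1) := by
      rw [hf]
    rw [h1, h2]
    exact mul_le_mul_of_nonneg_left (hpt' k hk) (Real.exp_pos _).le
  have key : ∀ d k : ℕ, n₀ ≤ k → k + d = m → f k ≤ f m := by
    intro d
    induction d with
    | zero => intro k _ he; rw [show k = m by omega]
    | succ d ih =>
      intro k hk he
      exact (hstep k hk (by omega)).trans (ih (k + 1) (by omega) (by omega))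
  refine ⟨hpt', ⟨⟨m, ⟨hm, le_refl m⟩, hfm⟩, ?_⟩, ?_⟩
  · rintro y ⟨k, ⟨hk1, hk2⟩, rfl⟩
    rw [← hfm]
    exact key (m - k) k hk1 (by omega)
  · rw [ha m, hmdef, Nat.cast_sub (by omega : 1 ≤ n)]
    norm_num
end

section
/- Let a_k = 1/(k+1) for k ≥ 0 and let λ ∈ (0,1]. Then for all integers n > n₀ ≥ 1: for every n₀ ≤ k ≤ n−2 one has exp(−λ Σ_{i=k+1}^{n−1} a_i) a_k ≥ exp(−λ Σ_{i=k+2}^{n−1} a_i) a_{k+1}, so that β_n := max_{n₀ ≤ k ≤ n−1} [ exp(−λ Σ_{i=k+1}^{n−1} a_i) · a_k ] = exp(−λ Σ_{i=n₀+1}^{n−1} a_i) · a_{n₀}, and moreover β_n ≤ 2 / ( (n+1)^λ · n₀^{1−λ} ). -/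
/-!
Write `f k = exp (-λ ∑_{i=k+1}^{n-1} a_i) a_k`. The sums in `f k` and `f (k+1)` share their tail, so
`f (k+1) ≤ f k` reduces to `a_{k+1} ≤ exp (-λ a_{k+1}) a_k`, which follows from `exp (-x) ≥ 1 - x`
and `(1 - λ/(k+2)) / (k+1) ≥ 1/(k+2)` for `λ ≤ 1`. Hence `f` decreases and `β_n = f n₀`.
For the bound, comparing the harmonic tail with `∫ dx/x` gives
`exp (-λ ∑_{i=n₀+1}^{n-1} a_i) ≤ ((n₀+2)/(n+1))^λ`, and weighted AM-GM gives
`(n₀+2)^λ n₀^(1-λ) ≤ n₀ + 2λ ≤ 2 (n₀+1)`.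
-/

open Real Finset

lemma one_div_add_one_le_exp_mul_one_div {lam t : ℝ} (hlam : lam ≤ 1) (ht : 0 < t) :
    1 / (t + 1) ≤ exp (-lam * (1 / (t + 1))) * (1 / t) := by
  have ht1 : 0 < t + 1 := by linarith
  calc 1 / (t + 1) = (1 - 1 / (t + 1)) * (1 / t) := by field_simp; ring
    _ ≤ (1 - lam * (1 / (t + 1))) * (1 / t) := by
        gcongr; exact mul_le_of_le_one_left (by positivity) hlam
    _ ≤ exp (-lam * (1 / (t + 1))) * (1 / t) := by
        gcongr; linarith [add_one_le_exp (-lam * (1 / (t + 1)))]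

lemma exp_neg_mul_sum_Icc_mul_succ_le {lam : ℝ} {a : ℕ → ℝ} {k m : ℕ}
    (hstep : a (k + 1) ≤ exp (-lam * a (k + 1)) * a k) (hk : k + 1 ≤ m) :
    exp (-lam * ∑ i ∈ Icc (k + 2) m, a i) * a (k + 1) ≤
      exp (-lam * ∑ i ∈ Icc (k + 1) m, a i) * a k := by
  rw [Icc_eq_cons_Ioc hk, sum_cons, ← Icc_add_one_left_eq_Ioc, mul_add, exp_add]
  calc exp (-lam * ∑ i ∈ Icc (k + 2) m, a i) * a (k + 1)
      ≤ exp (-lam * ∑ i ∈ Icc (k + 2) m, a i) * (exp (-lam * a (k + 1)) * a k) := by gcongr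
    _ = exp (-lam * a (k + 1)) * exp (-lam * ∑ i ∈ Icc (k + 1 + 1) m, a i) * a k := by ring

lemma isGreatest_image_Icc_of_succ_le {α : Type*} [Preorder α] {f : ℕ → α} {n₀ m : ℕ}
    (h : n₀ ≤ m) (hf : ∀ k, n₀ ≤ k → k + 1 ≤ m → f (k + 1) ≤ f k) :
    IsGreatest (f '' Set.Icc n₀ m) (f n₀) := by
  refine ⟨Set.mem_image_of_mem f ⟨le_rfl, h⟩, ?_⟩
  rintro _ ⟨k, ⟨hk, hkm⟩, rfl⟩
  induction k, hk using Nat.le_induction with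
  | base => exact le_rfl
  | succ k hk ih => exact (hf k hk hkm).trans (ih (by omega))

lemma log_div_le_sum_Ico_one_div {m N : ℕ} (h : m ≤ N) :
    log (((N : ℝ) + 1) / ((m : ℝ) + 1)) ≤ ∑ i ∈ Ico m N, 1 / ((i : ℝ) + 1) := by
  calc log (((N : ℝ) + 1) / ((m : ℝ) + 1))
      = ∫ x in ((m + 1 : ℕ) : ℝ)..((N + 1 : ℕ) : ℝ), x⁻¹ := by
        rw [integral_inv_of_pos (by positivity) (by positivity)]; push_cast; rfl
    _ ≤ ∑ d ∈ Ico (m + 1) (N + 1), (d : ℝ)⁻¹ :=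
        (inv_antitoneOn_Icc_right (by positivity)).integral_le_sum_Ico (by omega)
    _ = ∑ i ∈ Ico m N, 1 / ((i : ℝ) + 1) := by
        rw [← sum_Ico_add' (fun d : ℕ => (d : ℝ)⁻¹)]; push_cast; simp only [one_div]

lemma exp_neg_mul_sum_Ico_one_div_le {lam : ℝ} {m N : ℕ} (hlam : 0 ≤ lam) (h : m ≤ N) :
    exp (-lam * ∑ i ∈ Ico m N, 1 / ((i : ℝ) + 1)) ≤ (((m : ℝ) + 1) / ((N : ℝ) + 1)) ^ lam := by
  rw [rpow_def_of_pos (by positivity), ← inv_div, log_inv]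
  have := log_div_le_sum_Ico_one_div h
  exact exp_le_exp.2 (by nlinarith)

lemma add_two_rpow_mul_rpow_one_sub_le {lam x : ℝ} (hlam : lam ∈ Set.Icc (0 : ℝ) 1)
    (hx : 0 ≤ x) : (x + 2) ^ lam * x ^ (1 - lam) ≤ 2 * (x + 1) := by
  have := geom_mean_le_arith_mean2_weighted (p₁ := x + 2) hlam.1 (sub_nonneg.2 hlam.2)
    (by linarith) hx (add_sub_cancel lam 1)
  nlinarith [hlam.2]

lemma exp_neg_mul_sum_Icc_one_div_mul_le {lam : ℝ} {n₀ n : ℕ} (hlam : lam ∈ Set.Ioc (0 : ℝ) 1)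
    (hn₀ : 1 ≤ n₀) (hn : n₀ < n) :
    exp (-lam * ∑ i ∈ Icc (n₀ + 1) (n - 1), 1 / ((i : ℝ) + 1)) * (1 / ((n₀ : ℝ) + 1)) ≤
      2 / (((n : ℝ) + 1) ^ lam * (n₀ : ℝ) ^ (1 - lam)) := by
  have hn₀' : (0 : ℝ) < n₀ := by exact_mod_cast hn₀
  have htail : exp (-lam * ∑ i ∈ Icc (n₀ + 1) (n - 1), 1 / ((i : ℝ) + 1)) ≤
      ((n₀ : ℝ) + 2) ^ lam / ((n : ℝ) + 1) ^ lam := by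
    rw [← Ico_add_one_right_eq_Icc, Nat.sub_add_cancel (by omega), ← div_rpow (by positivity)
      (by positivity)]
    convert exp_neg_mul_sum_Ico_one_div_le hlam.1.le hn using 3
    push_cast; ring
  have hamgm := add_two_rpow_mul_rpow_one_sub_le (Set.Ioc_subset_Icc_self hlam) hn₀'.le
  calc exp (-lam * ∑ i ∈ Icc (n₀ + 1) (n - 1), 1 / ((i : ℝ) + 1)) * (1 / ((n₀ : ℝ) + 1))
      ≤ ((n₀ : ℝ) + 2) ^ lam / ((n : ℝ) + 1) ^ lam * (1 / ((n₀ : ℝ) + 1)) := by gcongr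
    _ = ((n₀ : ℝ) + 2) ^ lam * (n₀ : ℝ) ^ (1 - lam) /
          (((n : ℝ) + 1) ^ lam * (n₀ : ℝ) ^ (1 - lam) * ((n₀ : ℝ) + 1)) := by
        field_simp
    _ ≤ 2 * ((n₀ : ℝ) + 1) / (((n : ℝ) + 1) ^ lam * (n₀ : ℝ) ^ (1 - lam) * ((n₀ : ℝ) + 1)) := by
        gcongr
    _ = 2 / (((n : ℝ) + 1) ^ lam * (n₀ : ℝ) ^ (1 - lam)) := by
        field_simp

/-- Let a_k = 1/(k+1) and λ ∈ (0,1]. Then for all n > n₀ ≥ 1: for every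
n₀ ≤ k ≤ n−2, exp(−λ Σ_{i=k+1}^{n−1} a_i) a_k ≥ exp(−λ Σ_{i=k+2}^{n−1} a_i) a_{k+1},
so that β_n := max_{n₀ ≤ k ≤ n−1} [exp(−λ Σ_{i=k+1}^{n−1} a_i) a_k]
= exp(−λ Σ_{i=n₀+1}^{n−1} a_i) a_{n₀}, and moreover β_n ≤ 2/((n+1)^λ n₀^{1−λ}). -/
theorem stmt19 (lam : ℝ) (hlam : lam ∈ Set.Ioc (0 : ℝ) 1)
    (a : ℕ → ℝ) (ha : ∀ k : ℕ, a k = 1 / ((k : ℝ) + 1)) :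
    ∀ n₀ n : ℕ, 1 ≤ n₀ → n₀ < n →
      (∀ k : ℕ, n₀ ≤ k → k ≤ n - 2 →
        Real.exp (-lam * ∑ i ∈ Finset.Icc (k + 2) (n - 1), a i) * a (k + 1) ≤
          Real.exp (-lam * ∑ i ∈ Finset.Icc (k + 1) (n - 1), a i) * a k) ∧
      IsGreatest
        ((fun k => Real.exp (-lam * ∑ i ∈ Finset.Icc (k + 1) (n - 1), a i) * a k) ''
          Set.Icc n₀ (n - 1))
        (Real.exp (-lam * ∑ i ∈ Finset.Icc (n₀ + 1) (n - 1), a i) * a n₀) ∧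
      Real.exp (-lam * ∑ i ∈ Finset.Icc (n₀ + 1) (n - 1), a i) * a n₀ ≤
        2 / (((n : ℝ) + 1) ^ lam * (n₀ : ℝ) ^ (1 - lam)) := by
  intro n₀ n hn₀ hn
  obtain rfl : a = fun k : ℕ => 1 / ((k : ℝ) + 1) := funext ha
  have hstep : ∀ k : ℕ, k + 1 ≤ n - 1 →
      exp (-lam * ∑ i ∈ Icc (k + 2) (n - 1), 1 / ((i : ℝ) + 1)) * (1 / (((k + 1 : ℕ) : ℝ) + 1)) ≤
        exp (-lam * ∑ i ∈ Icc (k + 1) (n - 1), 1 / ((i : ℝ) + 1)) * (1 / ((k : ℝ) + 1)) :=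
    fun k hk => exp_neg_mul_sum_Icc_mul_succ_le
      (by push_cast; exact one_div_add_one_le_exp_mul_one_div hlam.2 (by positivity)) hk
  exact ⟨fun k _ hk => hstep k (by omega),
    isGreatest_image_Icc_of_succ_le (by omega) fun k _ hk => hstep k hk,
    exp_neg_mul_sum_Icc_one_div_mul_le hlam hn₀ hn⟩
end
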